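/- arXiv:2309.06210 — 4 statements merged into one kernel-verified Lean document; each statement's English description precedes it below -/
import Mathlib

section
/- There exists an absolute constant $C > 0$ such that for all integers $n \geq 1$, $d \geq 1$, any integer $c$, and any real $\alpha \in (0,1)$, one has $\Big| \sum_{0 \leq l \leq n,\ l \equiv c \bmod d} \binom{n}{l} \alpha^l (1-\alpha)^{n-l} - \frac{1}{d} \Big| \leq \frac{C}{\sqrt{\alpha(1-\alpha)n}}$. -/
/-!
Roots-of-unity filter: with `ζ = e^{2πi/d}`, `d · S = ∑_{j<d} ζ^{-cj} (α ζ^j + 1 - α)^n`, and the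
term `j = 0` equals `1`. For the others, `|α ζ^j + 1 - α|² = 1 - 2α(1-α)(1 - cos (2πj/d))`, and
Jordan's inequality `1 - cos (2πx) ≥ 8x²` (for `|x| ≤ 1/2`) bounds the `n`-th power by a Gaussian
`e^{-γ m²}`, `m = min (j, d - j)`, `γ = 8α(1-α)n/d²`. Comparing with the Gaussian integral,
`∑_{m ≥ 1} e^{-γ m²} ≤ √(π/γ)/2`, gives `|S - 1/d| ≤ √(π/8) / √(α(1-α)n)`.
-/

open Finset Real

namespace IsPrimitiveRoot

variable {K : Type*} [Field K] {ζ : K} {d : ℕ}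

theorem geom_sum_zpow (hζ : IsPrimitiveRoot ζ d) (k : ℤ) :
    ∑ j ∈ range d, (ζ ^ k) ^ j = if (d : ℤ) ∣ k then (d : K) else 0 := by
  split_ifs with hk
  · simp [(hζ.zpow_eq_one_iff_dvd k).2 hk]
  · have hpow : (ζ ^ k) ^ d = 1 := by
      rw [← zpow_natCast, ← zpow_mul, mul_comm, zpow_mul, hζ.zpow_eq_one, one_zpow]
    rw [geom_sum_eq (mt (hζ.zpow_eq_one_iff_dvd k).1 hk), hpow, sub_self, zero_div]

theorem natCast_mul_sum_filter_emod_eq (hζ : IsPrimitiveRoot ζ d) (hd : d ≠ 0)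
    (s : Finset ℕ) (a : ℕ → K) (c : ℤ) :
    (d : K) * ∑ l ∈ s.filter (fun l : ℕ => (l : ℤ) % d = c % d), a l =
      ∑ j ∈ range d, (ζ ^ (-c)) ^ j * ∑ l ∈ s, a l * (ζ ^ j) ^ l := by
  have hshift (j l : ℕ) : (ζ ^ (-c)) ^ j * (ζ ^ j) ^ l = (ζ ^ ((l : ℤ) - c)) ^ j := by
    rw [← pow_mul, mul_comm j l, pow_mul, ← zpow_natCast ζ l, ← mul_pow,
      ← zpow_add₀ (hζ.ne_zero hd), neg_add_eq_sub]
  have hmod (l : ℕ) : (l : ℤ) % d = c % d ↔ (d : ℤ) ∣ l - c :=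
    eq_comm.trans Int.modEq_iff_dvd
  calc (d : K) * ∑ l ∈ s.filter (fun l : ℕ => (l : ℤ) % d = c % d), a l
      = ∑ l ∈ s, a l * ∑ j ∈ range d, (ζ ^ ((l : ℤ) - c)) ^ j := by
        simp_rw [geom_sum_zpow hζ, ← hmod, sum_filter, mul_sum]
        exact sum_congr rfl fun l _ => by split_ifs <;> ring
    _ = ∑ j ∈ range d, (ζ ^ (-c)) ^ j * ∑ l ∈ s, a l * (ζ ^ j) ^ l := by
        simp_rw [mul_sum, ← hshift, mul_left_comm _ (a _)]
        exact sum_comm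

end IsPrimitiveRoot

theorem mul_add_pow_eq_sum_choose {R : Type*} [CommSemiring R] (x y z : R) (n : ℕ) :
    (x * z + y) ^ n = ∑ l ∈ range (n + 1), (n.choose l : R) * x ^ l * y ^ (n - l) * z ^ l := by
  rw [add_pow]
  exact sum_congr rfl fun l _ => by ring

theorem norm_ofReal_mul_add_one_sub_le {z : ℂ} (hz : ‖z‖ = 1) {α : ℝ} :
    ‖(α : ℂ) * z + (1 - α)‖ ≤ exp (-(α * (1 - α) * (1 - z.re))) := by
  have hz2 : z.re * z.re + z.im * z.im = 1 := by
    rw [← Complex.normSq_apply, Complex.normSq_eq_norm_sq, hz, one_pow]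
  have hsq : ‖(α : ℂ) * z + (1 - α)‖ ^ 2 = 1 - 2 * (α * (1 - α) * (1 - z.re)) := by
    rw [← Complex.normSq_eq_norm_sq, Complex.normSq_apply]
    simp only [Complex.add_re, Complex.add_im, Complex.re_ofReal_mul, Complex.im_ofReal_mul,
      Complex.sub_re, Complex.sub_im, Complex.one_re, Complex.one_im,
      Complex.ofReal_re, Complex.ofReal_im]
    linear_combination α ^ 2 * hz2
  refine (pow_le_pow_iff_left₀ (norm_nonneg _) (exp_pos _).le two_ne_zero).1 ?_
  rw [hsq, ← exp_nat_mul, Nat.cast_ofNat]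
  linarith [add_one_le_exp (2 * -(α * (1 - α) * (1 - z.re)))]

theorem Real.eight_mul_sq_le_one_sub_cos_two_pi_mul {x : ℝ} (hx : |x| ≤ 1 / 2) :
    8 * x ^ 2 ≤ 1 - cos (2 * π * x) := by
  have h := cos_le_one_sub_mul_cos_sq (x := 2 * π * x) (by
    rw [abs_mul, abs_of_pos (by positivity : 0 < 2 * π)]; nlinarith [pi_pos, abs_nonneg x])
  have : 2 / π ^ 2 * (2 * π * x) ^ 2 = 8 * x ^ 2 := by field_simp; ring
  linarith

theorem Real.exp_neg_mul_one_sub_cos_two_pi_mul_le {t x : ℝ} (ht : 0 ≤ t) (h0 : 0 ≤ x)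
    (h1 : x ≤ 1) :
    exp (-(t * (1 - cos (2 * π * x)))) ≤ exp (-(8 * t) * x ^ 2) + exp (-(8 * t) * (1 - x) ^ 2) := by
  rcases le_total x (1 / 2) with h | h
  · have := eight_mul_sq_le_one_sub_cos_two_pi_mul (abs_le.2 ⟨by linarith, h⟩)
    exact le_add_of_le_of_nonneg (exp_le_exp.2 (by nlinarith)) (exp_pos _).le
  · have := eight_mul_sq_le_one_sub_cos_two_pi_mul (x := x - 1)
      (abs_le.2 ⟨by linarith, by linarith⟩)
    rw [mul_sub, mul_one, cos_sub_two_pi] at this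
    exact le_add_of_nonneg_of_le (exp_pos _).le (exp_le_exp.2 (by nlinarith))

theorem sum_Ico_one_exp_neg_mul_sq_le {γ : ℝ} (hγ : 0 < γ) (N : ℕ) :
    ∑ m ∈ Ico 1 N, exp (-γ * m ^ 2) ≤ √(π / γ) / 2 := by
  set f : ℝ → ℝ := fun x => exp (-γ * x ^ 2)
  have hanti : AntitoneOn f (Set.Ici 0) := fun x hx y _ hxy => by
    have := pow_le_pow_left₀ (Set.mem_Ici.1 hx) hxy 2
    exact exp_le_exp.2 (by nlinarith)
  rcases N with _ | M
  · rw [Ico_eq_empty (by omega), sum_empty]; positivity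
  calc ∑ m ∈ Ico 1 (M + 1), f m = ∑ i ∈ Ico 0 M, f ↑(i + 1) := (sum_Ico_add' _ 0 M 1).symm
    _ ≤ ∫ x in (0 : ℕ)..(M : ℕ), f x :=
        (hanti.mono fun x hx => by simpa using hx.1).sum_le_integral_Ico (Nat.zero_le M)
    _ = ∫ x in Set.Ioc 0 (M : ℝ), f x := by simp [intervalIntegral.integral_of_le]
    _ ≤ ∫ x in Set.Ioi 0, f x :=
        MeasureTheory.setIntegral_mono_set (integrable_exp_neg_mul_sq hγ).integrableOn
          (MeasureTheory.ae_of_all _ fun x => (exp_pos _).le) Set.Ioc_subset_Ioi_self.eventuallyLE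
    _ = √(π / γ) / 2 := integral_gaussian_Ioi γ

theorem sum_Ico_exp_neg_mul_sq_add_reflect_le {γ : ℝ} (hγ : 0 < γ) (d : ℕ) :
    ∑ j ∈ Ico 1 d, (exp (-γ * j ^ 2) + exp (-γ * (d - j) ^ 2)) ≤ √(π / γ) := by
  have hreflect :
      ∑ j ∈ Ico 1 d, exp (-γ * ((d : ℝ) - j) ^ 2) = ∑ j ∈ Ico 1 d, exp (-γ * j ^ 2) := by
    have h := sum_Ico_reflect (fun j : ℕ => exp (-γ * (j : ℝ) ^ 2)) 1 (Nat.le_succ d)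
    rw [Nat.add_sub_cancel_left, Nat.add_sub_cancel] at h
    rw [← h]
    refine sum_congr rfl fun j hj => ?_
    rw [Nat.cast_sub (mem_Ico.1 hj).2.le]
  rw [sum_add_distrib, hreflect]
  linarith [sum_Ico_one_exp_neg_mul_sq_le hγ d]

theorem IsPrimitiveRoot.natCast_mul_sum_filter_emod_binomial_sub_one {K : Type*} [Field K]
    {ζ : K} {d : ℕ} (hζ : IsPrimitiveRoot ζ d) (hd : d ≠ 0) (n : ℕ) (c : ℤ) (α : K) :
    (d : K) * ∑ l ∈ (range (n + 1)).filter (fun l : ℕ => (l : ℤ) % d = c % d),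
        (n.choose l : K) * α ^ l * (1 - α) ^ (n - l) - 1 =
      ∑ j ∈ Ico 1 d, (ζ ^ (-c)) ^ j * (α * ζ ^ j + (1 - α)) ^ n := by
  simp_rw [hζ.natCast_mul_sum_filter_emod_eq hd, ← mul_add_pow_eq_sum_choose]
  rw [sum_range_eq_add_Ico _ (Nat.pos_of_ne_zero hd)]
  simp

theorem norm_ofReal_mul_exp_pow_add_one_sub_pow_le {α : ℝ} (h0 : 0 ≤ α) (h1 : α ≤ 1) (n : ℕ)
    {j d : ℕ} (hd : d ≠ 0) (hjd : j ≤ d) :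
    ‖(α : ℂ) * Complex.exp (2 * π * Complex.I / d) ^ j + (1 - α)‖ ^ n ≤
      exp (-(8 * (α * (1 - α) * n) / d ^ 2) * j ^ 2) +
        exp (-(8 * (α * (1 - α) * n) / d ^ 2) * (d - j) ^ 2) := by
  set t := α * (1 - α) * n with htdef
  have hd0 : (0 : ℝ) < d := by positivity
  have hnorm : ‖Complex.exp (2 * π * Complex.I / d) ^ j‖ = 1 := by
    rw [norm_pow, (Complex.isPrimitiveRoot_exp d hd).norm'_eq_one hd, one_pow]
  have hre : (Complex.exp (2 * π * Complex.I / d) ^ j).re = cos (2 * π * (j / d)) := by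
    rw [← Complex.exp_nat_mul, ← Complex.exp_ofReal_mul_I_re]
    push_cast
    ring_nf
  calc ‖(α : ℂ) * Complex.exp (2 * π * Complex.I / d) ^ j + (1 - α)‖ ^ n
      ≤ exp (-(α * (1 - α) * (1 - (Complex.exp (2 * π * Complex.I / d) ^ j).re))) ^ n :=
        pow_le_pow_left₀ (norm_nonneg _) (norm_ofReal_mul_add_one_sub_le hnorm) n
    _ = exp (-(t * (1 - cos (2 * π * (j / d))))) := by rw [← exp_nat_mul, hre, htdef]; ring_nf
    _ ≤ exp (-(8 * t) * (j / d) ^ 2) + exp (-(8 * t) * (1 - j / d) ^ 2) :=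
        exp_neg_mul_one_sub_cos_two_pi_mul_le (by positivity) (by positivity)
          (div_le_one_of_le₀ (by exact_mod_cast hjd) hd0.le)
    _ = exp (-(8 * t / d ^ 2) * j ^ 2) + exp (-(8 * t / d ^ 2) * (d - j) ^ 2) := by
        congr 2 <;> field_simp

theorem abs_sum_filter_emod_binomial_sub_inv_le {n d : ℕ} (hn : n ≠ 0) (hd : d ≠ 0) (c : ℤ)
    {α : ℝ} (h0 : 0 < α) (h1 : α < 1) :
    |(∑ l ∈ (range (n + 1)).filter (fun l : ℕ => (l : ℤ) % d = c % d),
        (n.choose l : ℝ) * α ^ l * (1 - α) ^ (n - l)) - 1 / d| ≤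
      √(π / 8) / √(α * (1 - α) * n) := by
  set S := ∑ l ∈ (range (n + 1)).filter (fun l : ℕ => (l : ℤ) % d = c % d),
    (n.choose l : ℝ) * α ^ l * (1 - α) ^ (n - l)
  set t := α * (1 - α) * n
  have ht : 0 < t := by have : 0 < 1 - α := sub_pos.2 h1; positivity
  have hd0 : (0 : ℝ) < d := by positivity
  set ζ := Complex.exp (2 * π * Complex.I / d)
  have hζ : IsPrimitiveRoot ζ d := Complex.isPrimitiveRoot_exp d hd
  have hfourier : (d : ℂ) * S - 1 =
      ∑ j ∈ Ico 1 d, (ζ ^ (-c)) ^ j * ((α : ℂ) * ζ ^ j + (1 - α)) ^ n := by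
    push_cast [S]
    exact hζ.natCast_mul_sum_filter_emod_binomial_sub_one hd n c α
  have hterm (j : ℕ) (hj : j ∈ Ico 1 d) :
      ‖(ζ ^ (-c)) ^ j * ((α : ℂ) * ζ ^ j + (1 - α)) ^ n‖ ≤
        exp (-(8 * t / d ^ 2) * j ^ 2) + exp (-(8 * t / d ^ 2) * (d - j) ^ 2) := by
    rw [norm_mul, norm_pow, norm_pow, norm_zpow, hζ.norm'_eq_one hd, one_zpow, one_pow, one_mul]
    exact norm_ofReal_mul_exp_pow_add_one_sub_pow_le h0.le h1.le n hd (mem_Ico.1 hj).2.le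
  have hnorm_eq : ‖(d : ℂ) * S - 1‖ = d * |S - 1 / d| := by
    rw [← Complex.ofReal_natCast, ← Complex.ofReal_mul, ← Complex.ofReal_one, ← Complex.ofReal_sub,
      Complex.norm_real, Real.norm_eq_abs, ← abs_of_pos hd0, ← abs_mul, abs_of_pos hd0, mul_sub,
      mul_one_div_cancel hd0.ne']
  have hsqrt : √(π / (8 * t / d ^ 2)) = d * (√(π / 8) / √t) := by
    rw [show π / (8 * t / d ^ 2) = d ^ 2 * (π / 8 / t) by field_simp,
      sqrt_mul (sq_nonneg _), sqrt_sq hd0.le, sqrt_div' _ ht.le]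
  have hbound : (d : ℝ) * |S - 1 / d| ≤ d * (√(π / 8) / √t) := by
    rw [← hnorm_eq, hfourier, ← hsqrt]
    exact (norm_sum_le _ _).trans
      ((sum_le_sum hterm).trans (sum_Ico_exp_neg_mul_sq_add_reflect_le (by positivity) d))
  exact le_of_mul_le_mul_left hbound hd0

/-- There is an absolute constant `C > 0` such that for all integers `n, d ≥ 1`, any integer `c`,
and any `α ∈ (0,1)`,
`|∑_{0 ≤ l ≤ n, l ≡ c mod d} C(n,l) α^l (1-α)^(n-l) - 1/d| ≤ C / √(α(1-α)n)`. -/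
theorem stmt_1 :
    ∃ C : ℝ, 0 < C ∧ ∀ (n d : ℕ) (c : ℤ) (α : ℝ), 1 ≤ n → 1 ≤ d → α ∈ Set.Ioo (0:ℝ) 1 →
      |(∑ l ∈ (Finset.range (n + 1)).filter (fun l : ℕ => ((l : ℤ)) % d = c % d),
          (n.choose l : ℝ) * α ^ l * (1 - α) ^ (n - l)) - 1 / d| ≤
        C / Real.sqrt (α * (1 - α) * n) :=
  ⟨√(π / 8), by positivity, fun _ _ c _ hn hd hα =>
    abs_sum_filter_emod_binomial_sub_inv_le (by omega) (by omega) c hα.1 hα.2⟩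
end

section
/- Let $k \geq 2$ be an integer, let $a > b \geq 1$ be integers, and let $r \geq 0$ be an integer. Define $f(i) = \sum_{1 \leq d \leq (ai+r)^{1/k},\ \gcd(a-b,\, d^k) \mid bi+r} \frac{\mu(d) \gcd(a-b,\, d^k)}{d^k}$. Then there exists a constant $C = C(k,a,b,r) > 0$ such that for all integers $N \geq 1$, $\Big| \sum_{1 \leq i \leq N} f(i) - \theta_k(a,b,r) N \Big| \leq C N^{1/k}$, where $\theta_k(a,b,r) = \prod_{p \text{ prime},\ \gcd(a,b,p^k) \mid r} \big(1 - \gcd(a,b,p^k)/p^k\big)$. -/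
/-!
Swapping the two sums, `∑_{i ≤ N} f i` becomes
`∑_{d ≤ D} μ(d) g_d / d^k · #{i ≤ N : d^k ≤ a i + r, g_d ∣ b i + r}`, where
`g_d = gcd(a - b, d^k)` and `D` is the integer `k`-th root of `a N + r`. The congruence
`g_d ∣ b i + r` is solvable iff `e_d = gcd(b, g_d) = gcd(a, b, d^k)` divides `r`, and then it
cuts out one residue class modulo `g_d / e_d`; so the count is `N e_d / g_d + O(1 + d^k / a)`,
and summing over `d ≤ D` gives `∑ f = N ∑_{d ≤ D} c(d) + O(D)` with
`c(d) = μ(d) e_d / d^k · [e_d ∣ r]`. This `c` is multiplicative and vanishes on `p^e` for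
`e ≥ 2`, so its Euler product is `θ_k(a, b, r)`, and its tail beyond `D` is `O(D^{1-k})`,
which costs `N D^{1-k} = O(N^{1/k})`.
-/

open ArithmeticFunction
open scoped ArithmeticFunction.Moebius

open Finset

namespace PowerFreeDensity

lemma natCast_rpow_one_div_pow {k : ℕ} (hk : k ≠ 0) (x : ℕ) :
    ((x : ℝ) ^ ((1 : ℝ) / k)) ^ k = x := by
  rw [one_div, Real.rpow_inv_natCast_pow x.cast_nonneg hk]

lemma floor_rpow_one_div_eq_nthRoot {k : ℕ} (hk : k ≠ 0) (x : ℕ) :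
    ⌊(x : ℝ) ^ ((1 : ℝ) / k)⌋₊ = Nat.nthRoot k x := by
  refine eq_of_forall_le_iff fun d ↦ ?_
  rw [Nat.le_nthRoot_iff hk, Nat.le_floor_iff (by positivity), one_div,
    Real.le_rpow_inv_iff_of_pos (by positivity) (by positivity) (by positivity), Real.rpow_natCast]
  norm_cast

lemma natCast_rpow_one_div_lt_nthRoot_add_one {k N x : ℕ} (hk : k ≠ 0) (hN : N ≤ x) :
    (N : ℝ) ^ ((1 : ℝ) / k) < Nat.nthRoot k x + 1 := by
  refine lt_of_pow_lt_pow_left₀ k (by positivity) ?_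
  rw [natCast_rpow_one_div_pow hk]
  exact_mod_cast hN.trans_lt (Nat.lt_pow_nthRoot_add_one hk x)

lemma nthRoot_le_mul_rpow_one_div {k N x c : ℕ} (hk : k ≠ 0) (hx : x ≤ c ^ k * N) :
    (Nat.nthRoot k x : ℝ) ≤ c * (N : ℝ) ^ ((1 : ℝ) / k) := by
  refine le_of_pow_le_pow_left₀ hk (by positivity) ?_
  rw [mul_pow, natCast_rpow_one_div_pow hk]
  exact_mod_cast ((Nat.le_nthRoot_iff hk).mp le_rfl).trans hx

lemma tsum_inv_sq_nat_add_le (D : ℕ) :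
    ∑' i : ℕ, (((i + (D + 1) : ℕ) : ℝ) ^ 2)⁻¹ ≤ 2 / (D + 1) := by
  refine Real.tsum_le_of_sum_range_le (fun _ ↦ by positivity) fun n ↦ ?_
  calc ∑ i ∈ range n, (((i + (D + 1) : ℕ) : ℝ) ^ 2)⁻¹
      = ∑ j ∈ Ioo D (D + 1 + n), ((j : ℝ) ^ 2)⁻¹ := by
        rw [← Ico_add_one_left_eq_Ioo, sum_Ico_eq_sum_range, Nat.add_sub_cancel_left]
        simp only [add_comm]
    _ ≤ 2 / (D + 1) := sum_Ioo_inv_sq_le D _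

lemma abs_card_filter_modEq_sub_le (N v : ℕ) {m : ℕ} (hm : 0 < m) :
    |(#{i ∈ Icc 1 N | i ≡ v [MOD m]} : ℝ) - N / m| ≤ 1 := by
  have hcard := Nat.Ioc_filter_modEq_card 0 N hm v
  set x : ℚ := ((0 : ℕ) - v) / m
  rw [← Icc_add_one_left_eq_Ioc, zero_add,
    show ((N : ℚ) - v) / m = x + N / m by simp only [x]; push_cast; ring] at hcard
  have hq : |(#{i ∈ Icc 1 N | i ≡ v [MOD m]} : ℚ) - N / m| ≤ 1 := by
    rw [show (#{i ∈ Icc 1 N | i ≡ v [MOD m]} : ℚ) =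
      ((max (⌊x + N / m⌋ - ⌊x⌋) 0 : ℤ) : ℚ) by exact_mod_cast hcard, abs_le]
    have := Int.floor_le x
    have := Int.lt_floor_add_one x
    have := Int.floor_le (x + N / m)
    have := Int.lt_floor_add_one (x + N / m)
    have : (0 : ℚ) ≤ N / m := by positivity
    push_cast
    constructor <;> cases max_cases ((⌊x + N / m⌋ : ℚ) - ⌊x⌋) 0 <;> linarith
  simpa using (Rat.cast_le (K := ℝ)).mpr hq

lemma exists_modEq_iff_dvd_mul_add {m b r : ℕ} (hm : 0 < m) (hr : Nat.gcd b m ∣ r) :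
    ∃ v, ∀ i, m ∣ b * i + r ↔ i ≡ v [MOD m / Nat.gcd b m] := by
  have hcop := Nat.coprime_div_gcd_div_gcd (Nat.gcd_pos_of_pos_right b hm)
  obtain ⟨b', hb'⟩ := Nat.gcd_dvd_left b m
  obtain ⟨m', hm'⟩ := Nat.gcd_dvd_right b m
  obtain ⟨r', rfl⟩ := hr
  generalize Nat.gcd b m = e at *
  subst hb' hm'
  have he : 0 < e := Nat.pos_of_mul_pos_right hm
  rw [Nat.mul_div_cancel_left _ he, Nat.mul_div_cancel_left _ he] at hcop
  have : NeZero m' := ⟨by rintro rfl; omega⟩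
  let u := ZMod.unitOfCoprime b' hcop
  refine ⟨((u⁻¹ : (ZMod m')ˣ) * -(r' : ZMod m')).val, fun i ↦ ?_⟩
  rw [Nat.mul_div_cancel_left _ he, ← ZMod.natCast_eq_natCast_iff, ZMod.natCast_zmod_val,
    Units.eq_inv_mul_iff_mul_eq, eq_neg_iff_add_eq_zero, ZMod.coe_unitOfCoprime,
    mul_assoc, ← mul_add, Nat.mul_dvd_mul_iff_left he, ← ZMod.natCast_eq_zero_iff]
  push_cast
  rfl

lemma abs_card_filter_dvd_mul_add_sub_le (N b r : ℕ) {m : ℕ} (hm : 0 < m) :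
    |(#{i ∈ Icc 1 N | m ∣ b * i + r} : ℝ) -
        if Nat.gcd b m ∣ r then (N : ℝ) * Nat.gcd b m / m else 0| ≤ 1 := by
  have he : 0 < Nat.gcd b m := Nat.gcd_pos_of_pos_right b hm
  split_ifs with hr
  · obtain ⟨v, hv⟩ := exists_modEq_iff_dvd_mul_add hm hr
    simp_rw [hv]
    convert abs_card_filter_modEq_sub_le N v (Nat.div_pos (Nat.gcd_le_right _ hm) he) using 3
    rw [Nat.cast_div (Nat.gcd_dvd_right _ _) (by positivity)]
    field_simp
  · have hempty : {i ∈ Icc 1 N | m ∣ b * i + r} = ∅ :=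
      filter_false_of_mem fun i _ hi ↦ hr <|
        (Nat.dvd_add_right ((Nat.gcd_dvd_left b m).mul_right i)).mp
          ((Nat.gcd_dvd_right b m).trans hi)
    simp [hempty]

lemma card_filter_mul_add_lt_le (N a r x : ℕ) (ha : 0 < a) :
    (#{i ∈ Icc 1 N | a * i + r < x} : ℝ) ≤ x / a := by
  have hsub : {i ∈ Icc 1 N | a * i + r < x} ⊆ Icc 1 (x / a) := by
    intro i hi
    simp only [mem_filter, mem_Icc] at hi ⊢
    exact ⟨hi.1.1, (Nat.le_div_iff_mul_le ha).mpr (by linarith)⟩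
  calc (#{i ∈ Icc 1 N | a * i + r < x} : ℝ) ≤ (x / a : ℕ) := by
        exact_mod_cast (card_le_card hsub).trans (by simp)
    _ ≤ x / a := Nat.cast_div_le

lemma abs_card_filter_le_and_dvd_sub_le (N a b r x : ℕ) {m : ℕ} (ha : 0 < a) (hm : 0 < m) :
    |(#{i ∈ Icc 1 N | x ≤ a * i + r ∧ m ∣ b * i + r} : ℝ) -
        if Nat.gcd b m ∣ r then (N : ℝ) * Nat.gcd b m / m else 0| ≤ x / a + 1 := by
  have hsplit := card_filter_add_card_filter_not (s := {i ∈ Icc 1 N | m ∣ b * i + r})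
    (fun i ↦ x ≤ a * i + r)
  simp only [filter_filter, not_le] at hsplit
  have hbad :
      #{i ∈ Icc 1 N | m ∣ b * i + r ∧ a * i + r < x} ≤ #{i ∈ Icc 1 N | a * i + r < x} :=
    card_le_card (monotone_filter_right _ fun _ _ h ↦ h.2)
  have hcount := abs_card_filter_dvd_mul_add_sub_le N b r hm
  have hwindow := card_filter_mul_add_lt_le N a r x ha
  simp only [and_comm (a := x ≤ _)]
  rw [abs_le] at hcount ⊢
  set bad := #{i ∈ Icc 1 N | m ∣ b * i + r ∧ a * i + r < x}
  have hsplit' : (#{i ∈ Icc 1 N | m ∣ b * i + r ∧ x ≤ a * i + r} : ℝ) + bad =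
      #{i ∈ Icc 1 N | m ∣ b * i + r} := by exact_mod_cast hsplit
  have hbad' : (bad : ℝ) ≤ #{i ∈ Icc 1 N | a * i + r < x} := by exact_mod_cast hbad
  constructor <;> linarith [bad.cast_nonneg (α := ℝ)]

lemma sum_sum_filter_Icc_eq_sum_mul_card (w : ℕ → ℝ) {u : ℕ → ℕ} (hu : Monotone u)
    (P : ℕ → ℕ → Prop) [∀ i d, Decidable (P i d)] (N : ℕ) :
    ∑ i ∈ Icc 1 N, ∑ d ∈ Icc 1 (u i) with P i d, w d =
      ∑ d ∈ Icc 1 (u N), w d * #{i ∈ Icc 1 N | d ≤ u i ∧ P i d} := by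
  have hwindow (i : ℕ) (hi : i ∈ Icc 1 N) :
      {d ∈ Icc 1 (u i) | P i d} = {d ∈ Icc 1 (u N) | d ≤ u i ∧ P i d} := by
    have := hu (mem_Icc.mp hi).2
    ext d
    simp only [mem_filter, mem_Icc]
    constructor
    · exact fun ⟨⟨h1, h2⟩, hP⟩ ↦ ⟨⟨h1, h2.trans this⟩, h2, hP⟩
    · exact fun ⟨⟨h1, _⟩, h2, hP⟩ ↦ ⟨⟨h1, h2⟩, hP⟩
  rw [sum_congr rfl fun i hi ↦ by rw [hwindow i hi, sum_filter], sum_comm]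
  refine sum_congr rfl fun d _ ↦ ?_
  rw [← sum_filter, sum_const, nsmul_eq_mul, mul_comm]

lemma abs_moebius_mul_div_pow_le (d k : ℕ) {c : ℝ} (hc : 0 ≤ c) :
    |μ d * c / (d : ℝ) ^ k| ≤ c / (d : ℝ) ^ k := by
  have hμ : |(μ d : ℝ)| ≤ 1 := by exact_mod_cast abs_moebius_le_one
  rw [abs_div, abs_mul, abs_of_nonneg hc, abs_pow, Nat.abs_cast]
  gcongr
  exact mul_le_of_le_one_left hc hμ

noncomputable def densityCoeff (k g r d : ℕ) : ℝ :=
  if Nat.gcd g (d ^ k) ∣ r then μ d * Nat.gcd g (d ^ k) / (d : ℝ) ^ k else 0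

section DensityCoeff

variable {k g r : ℕ}

lemma densityCoeff_zero : densityCoeff k g r 0 = 0 := by simp [densityCoeff]

lemma densityCoeff_one : densityCoeff k g r 1 = 1 := by simp [densityCoeff]

lemma densityCoeff_mul {m n : ℕ} (h : m.Coprime n) :
    densityCoeff k g r (m * n) = densityCoeff k g r m * densityCoeff k g r n := by
  have hmn : (m ^ k).Coprime (n ^ k) := h.pow k k
  have hgcd : (Nat.gcd g (m ^ k)).Coprime (Nat.gcd g (n ^ k)) :=
    hmn.coprime_dvd_left (Nat.gcd_dvd_right _ _) |>.coprime_dvd_right (Nat.gcd_dvd_right _ _)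
  have hμ : (μ (m * n) : ℝ) = μ m * μ n := by
    exact_mod_cast isMultiplicative_moebius.map_mul_of_coprime h
  have hdvd : Nat.gcd g (m ^ k) * Nat.gcd g (n ^ k) ∣ r ↔
      Nat.gcd g (m ^ k) ∣ r ∧ Nat.gcd g (n ^ k) ∣ r :=
    ⟨fun h ↦ ⟨dvd_of_mul_right_dvd h, dvd_of_mul_left_dvd h⟩,
      fun h ↦ hgcd.mul_dvd_of_dvd_of_dvd h.1 h.2⟩
  simp only [densityCoeff, mul_pow, hmn.gcd_mul, hdvd, ite_zero_mul_ite_zero, hμ]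
  congr 1
  push_cast
  ring

lemma abs_densityCoeff_le (hg : 0 < g) (d : ℕ) :
    |densityCoeff k g r d| ≤ g / (d : ℝ) ^ k := by
  unfold densityCoeff
  split_ifs
  · refine (abs_moebius_mul_div_pow_le d k (Nat.cast_nonneg _)).trans ?_
    gcongr
    exact Nat.le_of_dvd hg (Nat.gcd_dvd_left _ _)
  · rw [abs_zero]
    positivity

lemma summable_norm_densityCoeff (hg : 0 < g) (hk : 1 < k) :
    Summable fun d ↦ ‖densityCoeff k g r d‖ := by
  refine .of_nonneg_of_le (fun _ ↦ norm_nonneg _) (fun d ↦ ?_)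
    ((Real.summable_one_div_nat_pow.mpr hk).mul_left (g : ℝ))
  rw [Real.norm_eq_abs, mul_one_div]
  exact abs_densityCoeff_le hg d

lemma tsum_densityCoeff_prime_pow {p : ℕ} (hp : p.Prime) :
    ∑' e, densityCoeff k g r (p ^ e) =
      if Nat.gcd g (p ^ k) ∣ r then 1 - Nat.gcd g (p ^ k) / (p : ℝ) ^ k else 1 := by
  have hsupp : ∀ e ∉ ({0, 1} : Finset ℕ), densityCoeff k g r (p ^ e) = 0 := by
    intro e he
    simp only [Finset.mem_insert, Finset.mem_singleton, not_or] at he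
    simp [densityCoeff, moebius_apply_prime_pow hp he.1, he.2]
  rw [tsum_eq_sum hsupp, sum_pair zero_ne_one, pow_zero, pow_one, densityCoeff_one]
  simp only [densityCoeff, moebius_apply_prime hp]
  split_ifs <;> push_cast <;> ring

theorem tsum_densityCoeff_eq_tprod (hg : 0 < g) (hk : 1 < k) :
    ∑' d, densityCoeff k g r d =
      ∏' p : {p : ℕ // p.Prime ∧ Nat.gcd g (p ^ k) ∣ r},
        (1 - (Nat.gcd g ((p : ℕ) ^ k) : ℝ) / (p : ℕ) ^ k) := by
  rw [← EulerProduct.eulerProduct_tprod densityCoeff_one densityCoeff_mul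
    (summable_norm_densityCoeff hg hk) densityCoeff_zero]
  simp only [fun p : Nat.Primes ↦ tsum_densityCoeff_prime_pow (k := k) (g := g) (r := r) p.2]
  refine (_root_.tprod_subtype {p : ℕ | p.Prime} fun p ↦
      if Nat.gcd g (p ^ k) ∣ r then 1 - Nat.gcd g (p ^ k) / (p : ℝ) ^ k else 1).trans
    ((tprod_congr fun n ↦ ?_).trans
      (_root_.tprod_subtype {p : ℕ | p.Prime ∧ Nat.gcd g (p ^ k) ∣ r}
        fun p ↦ 1 - Nat.gcd g (p ^ k) / (p : ℝ) ^ k).symm)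
  by_cases hn : n.Prime <;> by_cases hd : Nat.gcd g (n ^ k) ∣ r <;>
    simp [Set.mulIndicator, hn, hd]

theorem abs_tsum_densityCoeff_sub_sum_le (hg : 0 < g) (hk : 2 ≤ k) (D : ℕ) :
    |∑' d, densityCoeff k g r d - ∑ d ∈ Icc 1 D, densityCoeff k g r d| ≤
      2 * g / ((D : ℝ) + 1) ^ (k - 1) := by
  have hs : Summable (densityCoeff k g r) := (summable_norm_densityCoeff hg hk).of_norm
  rw [← hs.sum_add_tsum_nat_add (D + 1), range_eq_Ico,
    sum_eq_sum_Ico_succ_bot (Nat.zero_lt_succ D), zero_add, densityCoeff_zero, zero_add,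
    Nat.succ_eq_add_one, Ico_add_one_right_eq_Icc, add_sub_cancel_left]
  obtain ⟨j, rfl⟩ : ∃ j, k = j + 2 := ⟨k - 2, by omega⟩
  have hterm (i : ℕ) : ‖densityCoeff (j + 2) g r (i + (D + 1))‖ ≤
      g / ((D : ℝ) + 1) ^ j * (((i + (D + 1) : ℕ) : ℝ) ^ 2)⁻¹ := by
    have hx : (D : ℝ) + 1 ≤ ((i + (D + 1) : ℕ) : ℝ) := by
      push_cast; linarith [i.cast_nonneg (α := ℝ)]
    rw [Real.norm_eq_abs]
    refine (abs_densityCoeff_le hg _).trans ?_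
    rw [pow_add, ← div_div, div_eq_mul_inv]
    gcongr
  have hsq : Summable fun i : ℕ ↦ (((i + (D + 1) : ℕ) : ℝ) ^ 2)⁻¹ :=
    (summable_nat_add_iff (f := fun n : ℕ ↦ ((n : ℝ) ^ 2)⁻¹) (D + 1)).mpr
      (Real.summable_nat_pow_inv.mpr one_lt_two)
  rw [← Real.norm_eq_abs]
  calc ‖∑' i, densityCoeff (j + 2) g r (i + (D + 1))‖
      ≤ g / ((D : ℝ) + 1) ^ j * ∑' i : ℕ, (((i + (D + 1) : ℕ) : ℝ) ^ 2)⁻¹ :=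
        tsum_of_norm_bounded (hsq.hasSum.mul_left _) hterm
    _ ≤ g / ((D : ℝ) + 1) ^ j * (2 / (D + 1)) := by gcongr; exact tsum_inv_sq_nat_add_le D
    _ = 2 * g / ((D : ℝ) + 1) ^ (j + 2 - 1) := by
      rw [show j + 2 - 1 = j + 1 from rfl, pow_succ]
      field_simp

theorem natCast_mul_abs_tsum_densityCoeff_sub_sum_le (hg : 0 < g) (hk : 2 ≤ k) {N D : ℕ}
    (hND : (N : ℝ) ^ ((1 : ℝ) / k) < D + 1) :
    N * |∑' d, densityCoeff k g r d - ∑ d ∈ Icc 1 D, densityCoeff k g r d| ≤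
      2 * g * (N : ℝ) ^ ((1 : ℝ) / k) := by
  have hk0 : k ≠ 0 := by omega
  set y := (N : ℝ) ^ ((1 : ℝ) / k)
  have hyk : y ^ k = N := natCast_rpow_one_div_pow hk0 N
  calc N * |∑' d, densityCoeff k g r d - ∑ d ∈ Icc 1 D, densityCoeff k g r d|
      ≤ N * (2 * g / ((D : ℝ) + 1) ^ (k - 1)) := by
        gcongr
        exact abs_tsum_densityCoeff_sub_sum_le hg hk D
    _ = 2 * g * (y ^ (k - 1) * y / ((D : ℝ) + 1) ^ (k - 1)) := by
        rw [pow_sub_one_mul hk0, hyk]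
        ring
    _ ≤ 2 * g * y := by
        gcongr
        rw [div_le_iff₀ (by positivity), mul_comm]
        gcongr

end DensityCoeff

lemma gcd_gcd_sub_pow_eq {a b : ℕ} (hab : b ≤ a) (k d : ℕ) :
    Nat.gcd b (Nat.gcd (a - b) (d ^ k)) = Nat.gcd (Nat.gcd a b) (d ^ k) := by
  rw [← Nat.gcd_assoc, Nat.gcd_sub_self_right hab, Nat.gcd_comm b a]

section SwappedSum

variable {k a b r : ℕ}

lemma abs_mul_card_sub_densityCoeff_le (hab : b < a) (N : ℕ) {d : ℕ} (hd : 0 < d) :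
    |μ d * Nat.gcd (a - b) (d ^ k) / (d : ℝ) ^ k *
          #{i ∈ Icc 1 N | d ^ k ≤ a * i + r ∧ Nat.gcd (a - b) (d ^ k) ∣ b * i + r} -
        N * densityCoeff k (Nat.gcd a b) r d| ≤ 1 + (a - b : ℕ) * (1 / (d : ℝ) ^ k) := by
  set m := Nat.gcd (a - b) (d ^ k)
  have hm : 0 < m := Nat.gcd_pos_of_pos_left _ (by omega)
  have hmain : (N : ℝ) * densityCoeff k (Nat.gcd a b) r d = μ d * m / (d : ℝ) ^ k *
      if Nat.gcd b m ∣ r then (N : ℝ) * Nat.gcd b m / m else 0 := by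
    rw [gcd_gcd_sub_pow_eq hab.le, densityCoeff]
    split_ifs
    · field_simp
    · simp
  have hcount := abs_card_filter_le_and_dvd_sub_le N a b r (d ^ k) (by omega : 0 < a) hm
  push_cast at hcount
  rw [hmain, ← mul_sub, abs_mul]
  calc |μ d * (m : ℝ) / (d : ℝ) ^ k| * |_ - _|
      ≤ m / (d : ℝ) ^ k * ((d : ℝ) ^ k / a + 1) :=
        mul_le_mul (abs_moebius_mul_div_pow_le d k m.cast_nonneg) hcount (abs_nonneg _)
          (by positivity)
    _ = m / a + m * (1 / (d : ℝ) ^ k) := by field_simp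
    _ ≤ 1 + (a - b : ℕ) * (1 / (d : ℝ) ^ k) := by
        have hma : m ≤ a - b := Nat.le_of_dvd (by omega) (Nat.gcd_dvd_left _ _)
        gcongr
        · rw [div_le_one (by exact_mod_cast (by omega : 0 < a))]
          exact_mod_cast hma.trans (Nat.sub_le a b)

theorem abs_sum_sub_sum_densityCoeff_le (hk : 1 < k) (hab : b < a) (N : ℕ) :
    |∑ i ∈ Icc 1 N,
          ∑ d ∈ Icc 1 (Nat.nthRoot k (a * i + r)) with Nat.gcd (a - b) (d ^ k) ∣ b * i + r,
            μ d * Nat.gcd (a - b) (d ^ k) / (d : ℝ) ^ k -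
        N * ∑ d ∈ Icc 1 (Nat.nthRoot k (a * N + r)), densityCoeff k (Nat.gcd a b) r d| ≤
      Nat.nthRoot k (a * N + r) + (a - b : ℕ) * ∑' d : ℕ, 1 / (d : ℝ) ^ k := by
  have hk0 : k ≠ 0 := by omega
  have hmono : Monotone fun i ↦ Nat.nthRoot k (a * i + r) := fun i j hij ↦
    (Nat.le_nthRoot_iff hk0).mpr (((Nat.le_nthRoot_iff hk0).mp le_rfl).trans (by gcongr))
  rw [sum_sum_filter_Icc_eq_sum_mul_card _ hmono, mul_sum, ← sum_sub_distrib]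
  simp only [Nat.le_nthRoot_iff hk0]
  calc _ ≤ ∑ d ∈ Icc 1 (Nat.nthRoot k (a * N + r)),
          (1 + (a - b : ℕ) * (1 / (d : ℝ) ^ k)) :=
        (abs_sum_le_sum_abs _ _).trans <| sum_le_sum fun d hd ↦
          abs_mul_card_sub_densityCoeff_le hab N (mem_Icc.mp hd).1
    _ = Nat.nthRoot k (a * N + r) +
          (a - b : ℕ) * ∑ d ∈ Icc 1 (Nat.nthRoot k (a * N + r)), 1 / (d : ℝ) ^ k := by
        rw [sum_add_distrib, ← mul_sum]
        simp
    _ ≤ Nat.nthRoot k (a * N + r) + (a - b : ℕ) * ∑' d : ℕ, 1 / (d : ℝ) ^ k := by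
        gcongr
        exact (Real.summable_one_div_nat_pow.mpr hk).sum_le_tsum _ fun _ _ ↦ by positivity

end SwappedSum

end PowerFreeDensity

open PowerFreeDensity

theorem stmt_9_general (k a b r : ℕ) (hk : 2 ≤ k) (hab : b < a)
    (f : ℕ → ℝ)
    (hf : ∀ i : ℕ, f i =
      ∑ d ∈ (Finset.Icc 1 ⌊((a * i + r : ℕ) : ℝ) ^ ((1 : ℝ) / k)⌋₊).filter
          (fun d => Nat.gcd (a - b) (d ^ k) ∣ b * i + r),
        (μ d : ℝ) * Nat.gcd (a - b) (d ^ k) / (d : ℝ) ^ k) :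
    ∃ C : ℝ, 0 < C ∧ ∀ N : ℕ, 1 ≤ N →
      |(∑ i ∈ Finset.Icc 1 N, f i) -
          (∏' p : {p : ℕ // p.Prime ∧ Nat.gcd (Nat.gcd a b) (p ^ k) ∣ r},
            (1 - (Nat.gcd (Nat.gcd a b) ((p : ℕ) ^ k) : ℝ) / (p : ℕ) ^ k)) * N| ≤
        C * (N : ℝ) ^ ((1 : ℝ) / k) := by
  have hk0 : k ≠ 0 := by omega
  have hg : 0 < Nat.gcd a b := Nat.gcd_pos_of_pos_left b (by omega)
  set Z : ℝ := ∑' d : ℕ, 1 / (d : ℝ) ^ k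
  have ha : (0 : ℝ) < a := by exact_mod_cast (by omega : 0 < a)
  refine ⟨a + r + (a - b : ℕ) * Z + 2 * Nat.gcd a b, by positivity, fun N hN ↦ ?_⟩
  rw [← tsum_densityCoeff_eq_tprod hg (by omega)]
  set D := Nat.nthRoot k (a * N + r)
  set y := (N : ℝ) ^ ((1 : ℝ) / k)
  set T := ∑ d ∈ Icc 1 D, densityCoeff k (Nat.gcd a b) r d
  set θ := ∑' d, densityCoeff k (Nat.gcd a b) r d
  have hmain : |∑ i ∈ Icc 1 N, f i - N * T| ≤ D + (a - b : ℕ) * Z := by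
    simp only [hf, floor_rpow_one_div_eq_nthRoot hk0]
    exact abs_sum_sub_sum_densityCoeff_le (by omega) hab N
  have htail : N * |θ - T| ≤ 2 * Nat.gcd a b * y :=
    natCast_mul_abs_tsum_densityCoeff_sub_sum_le hg hk
      (natCast_rpow_one_div_lt_nthRoot_add_one hk0 (by nlinarith))
  have hD : (D : ℝ) ≤ (a + r) * y := by
    have hx : a * N + r ≤ (a + r) ^ k * N := calc
      a * N + r ≤ (a + r) * N := by nlinarith
      _ ≤ (a + r) ^ k * N := by gcongr; exact le_self_pow₀ (by omega) hk0
    exact_mod_cast nthRoot_le_mul_rpow_one_div hk0 hx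
  have hZy : (a - b : ℕ) * Z ≤ (a - b : ℕ) * Z * y :=
    le_mul_of_one_le_right (by positivity) (Real.one_le_rpow (by exact_mod_cast hN) (by positivity))
  calc _ = |(∑ i ∈ Icc 1 N, f i - N * T) - N * (θ - T)| := by congr 1; ring
    _ ≤ D + (a - b : ℕ) * Z + 2 * Nat.gcd a b * y :=
        (abs_sub _ _).trans (add_le_add hmain (by rwa [abs_mul, Nat.abs_cast]))
    _ ≤ (a + r + (a - b : ℕ) * Z + 2 * Nat.gcd a b) * y := by linarith

/-- For `k ≥ 2`, integers `a > b ≥ 1`, `r ≥ 0`, and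
`f(i) = ∑_{1 ≤ d ≤ (ai+r)^(1/k), gcd(a-b,d^k) ∣ bi+r} μ(d) gcd(a-b,d^k) / d^k`,
there exists `C = C(k,a,b,r) > 0` such that for all `N ≥ 1`,
`|∑_{1 ≤ i ≤ N} f(i) - θ_k(a,b,r) N| ≤ C N^(1/k)`, where
`θ_k(a,b,r) = ∏_{p prime, gcd(a,b,p^k) ∣ r} (1 - gcd(a,b,p^k)/p^k)`. -/
theorem stmt_9 (k a b r : ℕ) (hk : 2 ≤ k) (hb : 1 ≤ b) (hab : b < a)
    (f : ℕ → ℝ)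
    (hf : ∀ i : ℕ, f i =
      ∑ d ∈ (Finset.Icc 1 ⌊((a * i + r : ℕ) : ℝ) ^ ((1 : ℝ) / k)⌋₊).filter
          (fun d => Nat.gcd (a - b) (d ^ k) ∣ b * i + r),
        (μ d : ℝ) * Nat.gcd (a - b) (d ^ k) / (d : ℝ) ^ k) :
    ∃ C : ℝ, 0 < C ∧ ∀ N : ℕ, 1 ≤ N →
      |(∑ i ∈ Finset.Icc 1 N, f i) -
          (∏' p : {p : ℕ // p.Prime ∧ Nat.gcd (Nat.gcd a b) (p ^ k) ∣ r},
            (1 - (Nat.gcd (Nat.gcd a b) ((p : ℕ) ^ k) : ℝ) / (p : ℕ) ^ k)) * N| ≤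
        C * (N : ℝ) ^ ((1 : ℝ) / k) :=
  stmt_9_general k a b r hk hab f hf
end

section
/- Let $k \geq 2$ be an integer, let $a, b \geq 1$ be integers, and let $r \geq 0$ be an integer. Then the series $\sum_{d \geq 1,\ \gcd(a,b,d^k) \mid r} \frac{\mu(d) \gcd(a,b,d^k)}{d^k}$ converges absolutely and equals the Euler product $\prod_{p \text{ prime},\ \gcd(a,b,p^k) \mid r} \Big( 1 - \frac{\gcd(a,b,p^k)}{p^k} \Big)$. -/
open ArithmeticFunction
open scoped ArithmeticFunction.Moebius

/-!
With `g = gcd(a, b)`, the summand `f(d) = μ(d) gcd(g, d^k) / d^k` (or `0` unless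
`gcd(g, d^k) ∣ r`) is multiplicative: for coprime `m, n` the gcd splits as
`gcd(g, m^k) gcd(g, n^k)` with coprime factors, so the divisibility condition splits too.
It is bounded by `g / d^2`, hence absolutely summable, and it vanishes off squarefree `d`, so its
Euler factor at `p` is just `1 + f(p)`.
-/

theorem tsum_eq_tprod_one_add_of_squarefree {R : Type*} [NormedCommRing R] [CompleteSpace R]
    {f : ℕ → R} (hf₁ : f 1 = 1) (hmul : ∀ {m n}, Nat.Coprime m n → f (m * n) = f m * f n)
    (hsum : Summable (‖f ·‖)) (hsq : ∀ n, ¬ Squarefree n → f n = 0) :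
    ∑' n, f n = ∏' p : Nat.Primes, (1 + f p) := by
  rw [← EulerProduct.eulerProduct_tprod hf₁ hmul hsum (hsq 0 not_squarefree_zero)]
  refine tprod_congr fun p => ?_
  have hpow : ∀ e ∉ ({0, 1} : Finset ℕ), f ((p : ℕ) ^ e) = 0 := fun e he => by
    simp only [Finset.mem_insert, Finset.mem_singleton, not_or] at he
    exact hsq _ fun h => he.2 ((Nat.squarefree_pow_iff p.prop.ne_one he.1).mp h).2
  rw [tsum_eq_sum hpow, Finset.sum_pair zero_ne_one, pow_zero, pow_one, hf₁]

theorem tprod_primes_ite_eq_tprod_subtype {α : Type*} [CommMonoid α] [TopologicalSpace α]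
    (P : ℕ → Prop) [DecidablePred P] (F : ℕ → α) :
    ∏' p : Nat.Primes, (if P p then F p else 1) = ∏' p : {p : ℕ // p.Prime ∧ P p}, F p := by
  have hinj :
      Function.Injective fun p : {p : ℕ // p.Prime ∧ P p} => (⟨p, p.2.1⟩ : Nat.Primes) :=
    fun p q h => Subtype.ext (Subtype.mk.inj h)
  refine (hinj.tprod_eq (f := fun p : Nat.Primes => if P p then F p else 1)
    fun p hp => ?_).symm.trans (tprod_congr fun p => if_pos p.2.2)
  have hP : P p := by_contra fun hP => hp (if_neg hP)
  exact ⟨⟨p, p.2, hP⟩, rfl⟩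

theorem Nat.gcd_mul_pow_of_coprime (g k : ℕ) {m n : ℕ} (h : m.Coprime n) :
    Nat.gcd g ((m * n) ^ k) = Nat.gcd g (m ^ k) * Nat.gcd g (n ^ k) := by
  rw [mul_pow]
  exact (Nat.Coprime.pow k k h).gcd_mul g

theorem Nat.gcd_mul_pow_dvd_iff_of_coprime (g k r : ℕ) {m n : ℕ} (h : m.Coprime n) :
    Nat.gcd g ((m * n) ^ k) ∣ r ↔ Nat.gcd g (m ^ k) ∣ r ∧ Nat.gcd g (n ^ k) ∣ r := by
  have hcop : (Nat.gcd g (m ^ k)).Coprime (Nat.gcd g (n ^ k)) :=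
    ((Nat.Coprime.pow k k h).coprime_dvd_left (Nat.gcd_dvd_right _ _)).coprime_dvd_right
      (Nat.gcd_dvd_right _ _)
  rw [Nat.gcd_mul_pow_of_coprime g k h]
  exact ⟨fun hd => ⟨dvd_of_mul_right_dvd hd, dvd_of_mul_left_dvd hd⟩,
    fun ⟨hm, hn⟩ => hcop.mul_dvd_of_dvd_of_dvd hm hn⟩

noncomputable def moebiusGcdTerm (g k r d : ℕ) : ℝ :=
  if Nat.gcd g (d ^ k) ∣ r then (μ d : ℝ) * Nat.gcd g (d ^ k) / (d : ℝ) ^ k else 0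

section moebiusGcdTerm

variable {g k : ℕ} (r : ℕ)

theorem moebiusGcdTerm_one : moebiusGcdTerm g k r 1 = 1 := by
  simp [moebiusGcdTerm]

theorem moebiusGcdTerm_of_not_squarefree {d : ℕ} (hd : ¬ Squarefree d) :
    moebiusGcdTerm g k r d = 0 := by
  simp [moebiusGcdTerm, moebius_eq_zero_of_not_squarefree hd]

theorem moebiusGcdTerm_mul {m n : ℕ} (h : m.Coprime n) :
    moebiusGcdTerm g k r (m * n) = moebiusGcdTerm g k r m * moebiusGcdTerm g k r n := by
  unfold moebiusGcdTerm
  simp only [Nat.gcd_mul_pow_dvd_iff_of_coprime g k r h]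
  rw [Nat.gcd_mul_pow_of_coprime g k h, isMultiplicative_moebius.map_mul_of_coprime h]
  split_ifs <;> first | tauto | simp only [mul_zero, zero_mul] | (push_cast; ring)

theorem abs_moebiusGcdTerm_le (hk : 2 ≤ k) (hg : 0 < g) (d : ℕ) :
    |moebiusGcdTerm g k r d| ≤ g / (d : ℝ) ^ 2 := by
  rcases Nat.eq_zero_or_pos d with rfl | hd
  · simp [moebiusGcdTerm]
  have hd₁ : (1 : ℝ) ≤ d := by exact_mod_cast hd
  have hdk : (0 : ℝ) < (d : ℝ) ^ k := by positivity
  have hgcd : (Nat.gcd g (d ^ k) : ℝ) ≤ g := by exact_mod_cast Nat.gcd_le_left _ hg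
  unfold moebiusGcdTerm
  split_ifs
  · calc |(μ d : ℝ) * Nat.gcd g (d ^ k) / (d : ℝ) ^ k|
          = |(μ d : ℝ)| * Nat.gcd g (d ^ k) / (d : ℝ) ^ k := by
            rw [abs_div, abs_mul, Nat.abs_cast, abs_of_pos hdk]
      _ ≤ 1 * g / (d : ℝ) ^ k := by
            gcongr
            exact_mod_cast abs_moebius_le_one
      _ ≤ g / (d : ℝ) ^ 2 := by
            rw [one_mul]
            exact div_le_div_of_nonneg_left (by positivity) (by positivity)
              (pow_le_pow_right₀ hd₁ hk)
  · simp only [abs_zero]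
    positivity

theorem summable_abs_moebiusGcdTerm (hk : 2 ≤ k) (hg : 0 < g) :
    Summable fun d => |moebiusGcdTerm g k r d| :=
  .of_nonneg_of_le (fun _ => abs_nonneg _) (abs_moebiusGcdTerm_le r hk hg)
    ((Real.summable_one_div_nat_pow.mpr one_lt_two).mul_left (g : ℝ) |>.congr fun d => by
      rw [mul_one_div])

theorem one_add_moebiusGcdTerm_of_prime {p : ℕ} (hp : p.Prime) :
    1 + moebiusGcdTerm g k r p =
      if Nat.gcd g (p ^ k) ∣ r then 1 - (Nat.gcd g (p ^ k) : ℝ) / (p : ℝ) ^ k else 1 := by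
  simp only [moebiusGcdTerm, moebius_apply_prime hp]
  split_ifs <;> push_cast <;> ring

end moebiusGcdTerm

theorem stmt_10_general (k a b r : ℕ) (hk : 2 ≤ k) (ha : 1 ≤ a) :
    Summable (fun d : ℕ =>
      |if Nat.gcd (Nat.gcd a b) (d ^ k) ∣ r then
          (μ d : ℝ) * Nat.gcd (Nat.gcd a b) (d ^ k) / (d : ℝ) ^ k
        else 0|) ∧
    (∑' d : ℕ, if Nat.gcd (Nat.gcd a b) (d ^ k) ∣ r then
        (μ d : ℝ) * Nat.gcd (Nat.gcd a b) (d ^ k) / (d : ℝ) ^ k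
      else 0) =
      ∏' p : {p : ℕ // p.Prime ∧ Nat.gcd (Nat.gcd a b) (p ^ k) ∣ r},
        (1 - (Nat.gcd (Nat.gcd a b) ((p : ℕ) ^ k) : ℝ) / (p : ℕ) ^ k) := by
  have hg : 0 < Nat.gcd a b := Nat.gcd_pos_of_pos_left b ha
  have hsum := summable_abs_moebiusGcdTerm r hk hg
  refine ⟨hsum, ?_⟩
  change ∑' d, moebiusGcdTerm (Nat.gcd a b) k r d = _
  rw [tsum_eq_tprod_one_add_of_squarefree (moebiusGcdTerm_one r) (moebiusGcdTerm_mul r) hsum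
      (fun _ => moebiusGcdTerm_of_not_squarefree r),
    tprod_congr fun p : Nat.Primes => one_add_moebiusGcdTerm_of_prime r p.prop]
  exact tprod_primes_ite_eq_tprod_subtype (fun p => Nat.gcd (Nat.gcd a b) (p ^ k) ∣ r)
    fun p => 1 - (Nat.gcd (Nat.gcd a b) (p ^ k) : ℝ) / (p : ℝ) ^ k

/-- For `k ≥ 2` and integers `a, b ≥ 1`, `r ≥ 0`, the series
`∑_{d ≥ 1, gcd(a,b,d^k) ∣ r} μ(d) gcd(a,b,d^k) / d^k` converges absolutely and equals the
Euler product `∏_{p prime, gcd(a,b,p^k) ∣ r} (1 - gcd(a,b,p^k)/p^k)`. -/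
theorem stmt_10 (k a b r : ℕ) (hk : 2 ≤ k) (ha : 1 ≤ a) (hb : 1 ≤ b) :
    Summable (fun d : ℕ =>
      |if Nat.gcd (Nat.gcd a b) (d ^ k) ∣ r then
          (μ d : ℝ) * Nat.gcd (Nat.gcd a b) (d ^ k) / (d : ℝ) ^ k
        else 0|) ∧
    (∑' d : ℕ, if Nat.gcd (Nat.gcd a b) (d ^ k) ∣ r then
        (μ d : ℝ) * Nat.gcd (Nat.gcd a b) (d ^ k) / (d : ℝ) ^ k
      else 0) =
      ∏' p : {p : ℕ // p.Prime ∧ Nat.gcd (Nat.gcd a b) (p ^ k) ∣ r},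
        (1 - (Nat.gcd (Nat.gcd a b) ((p : ℕ) ^ k) : ℝ) / (p : ℕ) ^ k) :=
  stmt_10_general k a b r hk ha
end

section
/- Let $k \geq 2$ be an integer, let $a > b \geq 1$ and $r \geq 0$ be integers, and let $\alpha \in (0,1)$. Consider the $\alpha$-random walk $P_0 = r$, $P_i = P_{i-1} + W_i$, where the $W_i$ are i.i.d. with $\mathbb{P}(W_i = a) = \alpha$, $\mathbb{P}(W_i = b) = 1-\alpha$, and let $X_i$ be the indicator that $P_i$ is $k$-free. Then there exists a constant $C = C(k,a,b,r) > 0$ such that for all $i \geq 1$, $\Big| \mathbb{E}(X_i) - f(i) \Big| \leq \frac{C\, i^{1/k - 1/2}}{\sqrt{\alpha(1-\alpha)}}$, where $f(i) = \sum_{1 \leq d \leq (ai+r)^{1/k},\ \gcd(a-b,\, d^k) \mid bi+r} \frac{\mu(d) \gcd(a-b,\, d^k)}{d^k}$. -/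
/-
Let `N` be the number of steps equal to `a` among the first `i`. Almost surely
`P_i = (b i + r) + (a - b) N` with `N ≤ i`, so every `d` with `d ^ k ∣ P_i` satisfies
`d ≤ (a i + r) ^ (1 / k)`, and Möbius inversion writes `E(X_i)` as `∑_d μ(d) P(d ^ k ∣ P_i)`.
For `g = gcd(a - b, d ^ k)` the event `d ^ k ∣ P_i` is empty unless `g ∣ b i + r`, and then it is
`m ∣ u N + c` with `m = d ^ k / g` coprime to `u = (a - b) / g`. By independence
`E(z ^ N) = (α z + 1 - α) ^ i`, so filtering with the `m`-th roots of unity `ζ` expresses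
`P(m ∣ u N + c) - 1 / m` as an average of `m - 1` terms bounded by `|α ζ ^ t + 1 - α| ^ i`, a
Gaussian in the distance from `t / m` to the nearest integer. Summing the Gaussians gives
`O(1 / √(α (1 - α) i))` for each of the at most `(a + r) i ^ (1 / k)` values of `d`.
-/

open MeasureTheory Filter ProbabilityTheory

/-- A positive integer `n` is `k`-free if no `k`-th power of a prime divides it. -/
def IsKFree (k n : ℕ) : Prop := ∀ p : ℕ, p.Prime → p ∣ n → ¬ p ^ k ∣ n

open Finset

-- the largest `d` with `d ^ k ∣ n`, when `n ≠ 0`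
noncomputable def kthRootOfPowerPart (k n : ℕ) : ℕ :=
  (Finsupp.mapRange (· / k) (Nat.zero_div k) n.factorization).prod (· ^ ·)

section KFree

variable {k n d : ℕ}

lemma factorization_kthRootOfPowerPart (k n : ℕ) :
    (kthRootOfPowerPart k n).factorization =
      Finsupp.mapRange (· / k) (Nat.zero_div k) n.factorization :=
  Nat.prod_pow_factorization_eq_self fun _ hp =>
    Nat.prime_of_mem_primeFactors (Finsupp.support_mapRange hp)

lemma kthRootOfPowerPart_ne_zero (k n : ℕ) : kthRootOfPowerPart k n ≠ 0 :=
  Finsupp.prod_ne_zero_iff.mpr fun _ hp =>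
    pow_ne_zero _ (Nat.prime_of_mem_primeFactors (Finsupp.support_mapRange hp)).ne_zero

lemma pow_dvd_iff_dvd_kthRootOfPowerPart (hk : k ≠ 0) (hn : n ≠ 0) (hd : d ≠ 0) :
    d ^ k ∣ n ↔ d ∣ kthRootOfPowerPart k n := by
  rw [← Nat.factorization_le_iff_dvd (pow_ne_zero _ hd) hn,
    ← Nat.factorization_le_iff_dvd hd (kthRootOfPowerPart_ne_zero k n),
    factorization_kthRootOfPowerPart, Nat.factorization_pow]
  refine forall_congr' fun p => ?_
  simp [Nat.le_div_iff_mul_le (Nat.pos_of_ne_zero hk), mul_comm]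

lemma isKFree_iff_kthRootOfPowerPart_eq_one (hk : k ≠ 0) (hn : n ≠ 0) :
    IsKFree k n ↔ kthRootOfPowerPart k n = 1 := by
  rw [Nat.eq_one_iff_not_exists_prime_dvd]
  refine forall_congr' fun p => imp_congr_right fun hp => ?_
  rw [← pow_dvd_iff_dvd_kthRootOfPowerPart hk hn hp.ne_zero]
  exact ⟨fun h hpk => h ((dvd_pow_self p hk).trans hpk) hpk, fun h _ => h⟩

lemma filter_pow_dvd_eq_divisors_kthRootOfPowerPart (hk : k ≠ 0) (hn : n ≠ 0) {D : ℕ}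
    (hD : n < (D + 1) ^ k) :
    {d ∈ Icc 1 D | d ^ k ∣ n} = (kthRootOfPowerPart k n).divisors := by
  ext d
  simp only [mem_filter, mem_Icc, Nat.mem_divisors, kthRootOfPowerPart_ne_zero, ne_eq,
    not_false_eq_true, and_true]
  constructor
  · rintro ⟨⟨hd, -⟩, hdn⟩
    exact (pow_dvd_iff_dvd_kthRootOfPowerPart hk hn (by omega)).mp hdn
  · intro hdm
    have hd : d ≠ 0 := ne_zero_of_dvd_ne_zero (kthRootOfPowerPart_ne_zero k n) hdm
    have hdn := (pow_dvd_iff_dvd_kthRootOfPowerPart hk hn hd).mpr hdm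
    have : d ^ k < (D + 1) ^ k := (Nat.le_of_dvd (Nat.pos_of_ne_zero hn) hdn).trans_lt hD
    exact ⟨⟨by omega, Nat.lt_succ_iff.mp (lt_of_pow_lt_pow_left₀ k (by omega) this)⟩, hdn⟩

open scoped Classical in
lemma sum_moebius_pow_dvd_eq_ite_isKFree {R : Type*} [Ring R] (hk : k ≠ 0) (hn : n ≠ 0) {D : ℕ}
    (hD : n < (D + 1) ^ k) :
    ∑ d ∈ Icc 1 D with d ^ k ∣ n, (ArithmeticFunction.moebius d : R) =
      if IsKFree k n then 1 else 0 := by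
  rw [filter_pow_dvd_eq_divisors_kthRootOfPowerPart hk hn hD,
    isKFree_iff_kthRootOfPowerPart_eq_one hk hn]
  have := congrArg (· (kthRootOfPowerPart k n))
    (ArithmeticFunction.coe_moebius_mul_coe_zeta (R := R))
  simp only [ArithmeticFunction.coe_mul_zeta_apply, ArithmeticFunction.one_apply,
    ArithmeticFunction.intCoe_apply] at this
  convert this

lemma lt_natFloor_rpow_one_div_add_one_pow (hk : k ≠ 0) (n : ℕ) :
    n < (⌊(n : ℝ) ^ ((1 : ℝ) / k)⌋₊ + 1) ^ k := by
  have hroot : ((n : ℝ) ^ ((1 : ℝ) / k)) ^ k = n := by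
    rw [← Real.rpow_natCast, ← Real.rpow_mul n.cast_nonneg, one_div_mul_cancel (by positivity),
      Real.rpow_one]
  have hlt : ((n : ℝ) ^ ((1 : ℝ) / k)) ^ k < ((⌊(n : ℝ) ^ ((1 : ℝ) / k)⌋₊ : ℝ) + 1) ^ k :=
    pow_lt_pow_left₀ (Nat.lt_floor_add_one _) (by positivity) hk
  rw [hroot] at hlt
  exact_mod_cast hlt

lemma natFloor_rpow_one_div_le {a r i : ℕ} (ha : 1 ≤ a) (hi : 1 ≤ i) (hk : k ≠ 0) :
    (⌊((a * i + r : ℕ) : ℝ) ^ ((1 : ℝ) / k)⌋₊ : ℝ) ≤ (a + r) * (i : ℝ) ^ ((1 : ℝ) / k) := by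
  have hk' : (1 : ℝ) / k ≤ 1 := by
    rw [div_le_one (by positivity)]
    exact_mod_cast Nat.one_le_iff_ne_zero.mpr hk
  have ha' : (1 : ℝ) ≤ a := by exact_mod_cast ha
  have hi' : (1 : ℝ) ≤ i := by exact_mod_cast hi
  calc (⌊((a * i + r : ℕ) : ℝ) ^ ((1 : ℝ) / k)⌋₊ : ℝ)
      ≤ ((a * i + r : ℕ) : ℝ) ^ ((1 : ℝ) / k) := Nat.floor_le (by positivity)
    _ ≤ ((a + r) * i : ℝ) ^ ((1 : ℝ) / k) := by
        gcongr
        push_cast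
        nlinarith [r.cast_nonneg (α := ℝ)]
    _ = (a + r : ℝ) ^ ((1 : ℝ) / k) * (i : ℝ) ^ ((1 : ℝ) / k) :=
        Real.mul_rpow (by positivity) (by positivity)
    _ ≤ (a + r) * (i : ℝ) ^ ((1 : ℝ) / k) := by
        gcongr
        exact Real.rpow_le_self_of_one_le (by linarith [r.cast_nonneg (α := ℝ)]) hk'

end KFree

lemma sum_Ico_exp_neg_mul_sq_le {τ : ℝ} (hτ : 0 < τ) (M : ℕ) :
    ∑ t ∈ Ico 1 M, Real.exp (-(τ * t ^ 2)) ≤ 3 / √τ := by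
  set s := √τ
  have hs : 0 < s := Real.sqrt_pos.mpr hτ
  have hx : Real.exp (-s) < 1 := Real.exp_lt_one_iff.mpr (by linarith)
  -- `τ t ^ 2 = (s t) ^ 2 ≥ s t - 1` turns the Gaussian into a geometric series
  have hterm : ∀ t : ℕ, Real.exp (-(τ * t ^ 2)) ≤ Real.exp 1 * Real.exp (-s) ^ t := by
    intro t
    rw [← Real.exp_nat_mul, ← Real.exp_add, Real.exp_le_exp, ← Real.sq_sqrt hτ.le]
    nlinarith [sq_nonneg (s * t - 1)]
  calc ∑ t ∈ Ico 1 M, Real.exp (-(τ * t ^ 2))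
      ≤ Real.exp 1 * ∑ t ∈ Ico 1 M, Real.exp (-s) ^ t := by
        rw [mul_sum]
        exact sum_le_sum fun t _ => hterm t
    _ ≤ Real.exp 1 * (Real.exp (-s) ^ 1 / (1 - Real.exp (-s))) := by
        gcongr
        exact geom_sum_Ico_le_of_lt_one (Real.exp_pos _).le hx
    _ ≤ 3 / s := by
        have he : Real.exp 1 < 3 := Real.exp_one_lt_d9.trans (by norm_num)
        have h1 : Real.exp (-s) * (1 + s) ≤ 1 := by
          rw [Real.exp_neg]
          exact (inv_mul_le_one₀ (Real.exp_pos s)).mpr (by linarith [Real.add_one_le_exp s])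
        rw [pow_one, mul_div_assoc', div_le_div_iff₀ (by linarith) hs]
        nlinarith [Real.exp_pos (-s), Real.exp_pos 1]

lemma sum_Ico_comp_mul_mod {M : Type*} [AddCommMonoid M] {m u : ℕ} (hu : u.Coprime m)
    (F : ℕ → M) : ∑ j ∈ Ico 1 m, F (j * u % m) = ∑ t ∈ Ico 1 m, F t := by
  have hinj : Set.InjOn (fun j => j * u % m) (Ico 1 m) := by
    intro j₁ hj₁ j₂ hj₂ h
    simp only [coe_Ico, Set.mem_Ico] at hj₁ hj₂
    have := Nat.ModEq.cancel_right_of_coprime (Nat.coprime_comm.mp hu) h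
    rwa [Nat.ModEq, Nat.mod_eq_of_lt hj₁.2, Nat.mod_eq_of_lt hj₂.2] at this
  have hmaps : (Ico 1 m).image (fun j => j * u % m) ⊆ Ico 1 m := by
    simp only [subset_iff, mem_image, mem_Ico]
    rintro _ ⟨j, hj, rfl⟩
    refine ⟨Nat.pos_of_ne_zero fun h => ?_, Nat.mod_lt _ (by omega)⟩
    have := (Nat.Coprime.dvd_mul_right (Nat.coprime_comm.mp hu)).mp (Nat.dvd_of_mod_eq_zero h)
    exact absurd (Nat.le_of_dvd (by omega) this) (by omega)
  rw [← sum_image hinj, eq_of_subset_of_card_le hmaps (card_image_of_injOn hinj).ge]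

section RootsOfUnity

open Complex

noncomputable def bernoulliPGF (α : ℝ) (z : ℂ) : ℂ := α * z + (1 - α)

lemma IsPrimitiveRoot.sum_range_pow_mul_eq_ite {R : Type*} [CommRing R] [IsDomain R] {ζ : R}
    {m : ℕ} (hζ : IsPrimitiveRoot ζ m) (n : ℕ) :
    ∑ j ∈ range m, ζ ^ (j * n) = if m ∣ n then (m : R) else 0 := by
  simp_rw [pow_mul']
  split_ifs with h
  · simp [(hζ.pow_eq_one_iff_dvd n).mpr h]
  · have hgeom := geom_sum_mul (ζ ^ n) m
    rw [pow_right_comm, hζ.pow_eq_one, one_pow, sub_self] at hgeom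
    exact (mul_eq_zero.mp hgeom).resolve_right
      (sub_ne_zero.mpr (mt (hζ.pow_eq_one_iff_dvd n).mp h))

lemma norm_bernoulliPGF_exp_sq (α θ : ℝ) :
    ‖bernoulliPGF α (exp (θ * I))‖ ^ 2 = 1 - 2 * α * (1 - α) * (1 - Real.cos θ) := by
  rw [bernoulliPGF, Complex.sq_norm, Complex.normSq_apply]
  simp only [add_re, add_im, mul_re, mul_im, ofReal_re, ofReal_im, exp_ofReal_mul_I_re,
    exp_ofReal_mul_I_im, sub_re, sub_im, one_re, one_im]
  linear_combination α ^ 2 * Real.sin_sq_add_cos_sq θ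

lemma norm_bernoulliPGF_exp_le {α θ : ℝ} (hα₀ : 0 ≤ α) (hα₁ : α ≤ 1) (hθ : |θ| ≤ Real.pi) :
    ‖bernoulliPGF α (exp (θ * I))‖ ≤ Real.exp (-(2 * α * (1 - α) / Real.pi ^ 2 * θ ^ 2)) := by
  have hcos := Real.cos_le_one_sub_mul_cos_sq hθ
  have hβ : 0 ≤ α * (1 - α) := mul_nonneg hα₀ (by linarith)
  have hsq : ‖bernoulliPGF α (exp (θ * I))‖ ^ 2
      ≤ Real.exp (-(2 * α * (1 - α) / Real.pi ^ 2 * θ ^ 2)) ^ 2 := by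
    rw [norm_bernoulliPGF_exp_sq, ← Real.exp_nat_mul]
    have := mul_le_mul_of_nonneg_left (sub_le_sub_left hcos 1) hβ
    calc 1 - 2 * α * (1 - α) * (1 - Real.cos θ)
        ≤ (2 : ℕ) * -(2 * α * (1 - α) / Real.pi ^ 2 * θ ^ 2) + 1 := by
          push_cast
          linarith [show 2 * α * (1 - α) / Real.pi ^ 2 * θ ^ 2 =
            α * (1 - α) * (1 - (1 - 2 / Real.pi ^ 2 * θ ^ 2)) by ring]
      _ ≤ _ := Real.add_one_le_exp _
  exact (pow_le_pow_iff_left₀ (norm_nonneg _) (Real.exp_pos _).le two_ne_zero).mp hsq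

lemma exp_two_pi_I_div_pow (m t : ℕ) :
    exp (2 * Real.pi * I / m) ^ t = exp ((2 * Real.pi * t / m : ℝ) * I) := by
  rw [← exp_nat_mul]
  push_cast
  ring_nf

lemma exp_two_pi_I_div_pow_eq_neg {m t : ℕ} (hm : m ≠ 0) (ht : t ≤ m) :
    exp (2 * Real.pi * I / m) ^ t = exp ((-(2 * Real.pi * (m - t : ℕ) / m) : ℝ) * I) := by
  rw [exp_two_pi_I_div_pow, ← div_one (exp _), ← exp_two_pi_mul_I, ← exp_sub]
  congr 1
  have : (m : ℂ) ≠ 0 := by exact_mod_cast hm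
  push_cast [ht]
  field_simp
  ring

lemma norm_bernoulliPGF_exp_two_pi_I_div_pow_le {α : ℝ} (hα₀ : 0 ≤ α) (hα₁ : α ≤ 1)
    {m t : ℕ} (ht : t ≤ m) :
    ‖bernoulliPGF α (exp (2 * Real.pi * I / m) ^ t)‖ ≤
      Real.exp (-(8 * α * (1 - α) / m ^ 2 * (min t (m - t) : ℕ) ^ 2)) := by
  have hπ := Real.pi_pos
  rcases le_or_gt (2 * t) m with h | h
  · have hθ : |2 * Real.pi * t / m| ≤ Real.pi := by
      rcases Nat.eq_zero_or_pos m with rfl | hm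
      · simp [hπ.le]
      rw [abs_of_nonneg (by positivity), div_le_iff₀ (by positivity)]
      have : (2 * t : ℝ) ≤ m := by exact_mod_cast h
      nlinarith
    rw [exp_two_pi_I_div_pow, min_eq_left (by omega)]
    refine (norm_bernoulliPGF_exp_le hα₀ hα₁ hθ).trans_eq ?_
    congr 1
    field_simp
    ring
  · have hm : (0 : ℝ) < m := by exact_mod_cast (by omega : 0 < m)
    have hθ : |-(2 * Real.pi * (m - t : ℕ) / m)| ≤ Real.pi := by
      rw [abs_neg, abs_of_nonneg (by positivity), div_le_iff₀ hm]
      have : (2 * (m - t : ℕ) : ℝ) ≤ m := by exact_mod_cast (by omega : 2 * (m - t) ≤ m)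
      nlinarith
    rw [exp_two_pi_I_div_pow_eq_neg (by omega) ht, min_eq_right (by omega)]
    refine (norm_bernoulliPGF_exp_le hα₀ hα₁ hθ).trans_eq ?_
    congr 1
    field_simp
    ring

lemma norm_bernoulliPGF_exp_two_pi_I_div_pow_pow_le {α : ℝ} (hα₀ : 0 ≤ α) (hα₁ : α ≤ 1)
    {m t : ℕ} (ht : t ≤ m) (i : ℕ) :
    ‖bernoulliPGF α (exp (2 * Real.pi * I / m) ^ t)‖ ^ i ≤
      Real.exp (-(8 * α * (1 - α) * i / m ^ 2 * t ^ 2)) +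
        Real.exp (-(8 * α * (1 - α) * i / m ^ 2 * (m - t : ℕ) ^ 2)) := by
  refine (pow_le_pow_left₀ (norm_nonneg _)
    (norm_bernoulliPGF_exp_two_pi_I_div_pow_le hα₀ hα₁ ht) i).trans ?_
  rw [← Real.exp_nat_mul]
  rcases min_choice t (m - t) with h | h <;> rw [h]
  · refine le_add_of_le_of_nonneg (le_of_eq ?_) (Real.exp_pos _).le
    congr 1
    ring
  · refine le_add_of_nonneg_of_le (Real.exp_pos _).le (le_of_eq ?_)
    congr 1
    ring

lemma sum_Ico_norm_bernoulliPGF_pow_le {α : ℝ} (hα : α ∈ Set.Ioo 0 1) {m u : ℕ}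
    (hu : u.Coprime m) {i : ℕ} (hi : 0 < i) :
    ∑ j ∈ Ico 1 m, ‖bernoulliPGF α (exp (2 * Real.pi * I / m) ^ (j * u))‖ ^ i ≤
      3 * m / √(α * (1 - α) * i) := by
  obtain ⟨hα₀, hα₁⟩ := hα
  rcases Nat.eq_zero_or_pos m with rfl | hm
  · simp
  set τ := 8 * α * (1 - α) * i / m ^ 2
  set β := α * (1 - α)
  have hβi : 0 < β * i := mul_pos (by nlinarith) (by exact_mod_cast hi)
  have hτ : 0 < τ := by positivity
  have hreflect : ∑ t ∈ Ico 1 m, Real.exp (-(τ * (m - t : ℕ) ^ 2)) =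
      ∑ t ∈ Ico 1 m, Real.exp (-(τ * t ^ 2)) := by
    rw [sum_Ico_reflect (fun t : ℕ => Real.exp (-(τ * t ^ 2))) 1 (by omega : m ≤ m + 1),
      Nat.add_sub_cancel_left, Nat.add_sub_cancel]
  have hsqrt : √τ = √(8 * (β * i)) / m := by
    rw [Real.sqrt_div' _ (by positivity), Real.sqrt_sq (by positivity), mul_assoc 8, mul_assoc 8,
      mul_assoc α]
  calc ∑ j ∈ Ico 1 m, ‖bernoulliPGF α (exp (2 * Real.pi * I / m) ^ (j * u))‖ ^ i
      = ∑ t ∈ Ico 1 m, ‖bernoulliPGF α (exp (2 * Real.pi * I / m) ^ t)‖ ^ i := by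
        simp_rw [← pow_mod_orderOf _ (_ * u), ← (Complex.isPrimitiveRoot_exp m hm.ne').eq_orderOf]
        exact sum_Ico_comp_mul_mod hu fun t => ‖bernoulliPGF α (exp (2 * Real.pi * I / m) ^ t)‖ ^ i
    _ ≤ ∑ t ∈ Ico 1 m, (Real.exp (-(τ * t ^ 2)) + Real.exp (-(τ * (m - t : ℕ) ^ 2))) :=
        sum_le_sum fun t ht => norm_bernoulliPGF_exp_two_pi_I_div_pow_pow_le hα₀.le hα₁.le
          (mem_Ico.mp ht).2.le i
    _ ≤ 6 / √τ := by
        rw [sum_add_distrib, hreflect, show (6 : ℝ) / √τ = 3 / √τ + 3 / √τ by ring]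
        exact add_le_add (sum_Ico_exp_neg_mul_sq_le hτ m) (sum_Ico_exp_neg_mul_sq_le hτ m)
    _ ≤ 3 * m / √(β * i) := by
        have hsqrt_le : 2 * √(β * i) ≤ √(8 * (β * i)) := by
          rw [Real.le_sqrt (by positivity) (by positivity), mul_pow, Real.sq_sqrt hβi.le]
          linarith
        rw [hsqrt, div_div_eq_mul_div, div_le_div_iff₀ (by positivity) (by positivity)]
        nlinarith [Real.sqrt_nonneg (β * i)]

end RootsOfUnity

lemma ProbabilityTheory.iIndepFun.integral_finsetProd_comp {Ω ι β 𝕜 : Type*} [RCLike 𝕜]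
    {mΩ : MeasurableSpace Ω} {μ : Measure Ω} [MeasurableSpace β] {Y : ι → Ω → β}
    (hY : iIndepFun Y μ) (hYm : ∀ j, Measurable (Y j)) {f : β → 𝕜} (hf : Measurable f)
    (s : Finset ι) : ∫ ω, ∏ j ∈ s, f (Y j ω) ∂μ = ∏ j ∈ s, ∫ ω, f (Y j ω) ∂μ := by
  have := (hY.precomp (g := ((↑) : s → ι)) Subtype.val_injective).integral_fun_prod_comp
    (f := fun _ => f) (fun j => (hYm j).aemeasurable) (fun _ => hf.aestronglyMeasurable)
  convert this using 2
  · exact funext fun ω => (prod_coe_sort s fun j => f (Y j ω)).symm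
  · exact (prod_coe_sort s fun j => ∫ ω, f (Y j ω) ∂μ).symm

section StepCount

variable {Ω : Type*} {W : ℕ → Ω → ℕ} {a b i : ℕ}

def stepCount (W : ℕ → Ω → ℕ) (a i : ℕ) (ω : Ω) : ℕ := #{j ∈ range i | W j ω = a}

lemma stepCount_le (W : ℕ → Ω → ℕ) (a i : ℕ) (ω : Ω) : stepCount W a i ω ≤ i :=
  (card_filter_le _ _).trans (card_range i).le

lemma sum_range_eq_add_stepCount {ω : Ω} (hba : b ≤ a) (hW : ∀ j < i, W j ω = a ∨ W j ω = b) :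
    ∑ j ∈ range i, W j ω = b * i + (a - b) * stepCount W a i ω := by
  calc ∑ j ∈ range i, W j ω = ∑ j ∈ range i, (b + (a - b) * if W j ω = a then 1 else 0) := by
        refine sum_congr rfl fun j hj => ?_
        rcases hW j (mem_range.mp hj) with h | h <;> split_ifs <;> omega
    _ = b * i + (a - b) * stepCount W a i ω := by
        rw [sum_add_distrib, sum_const, card_range, ← mul_sum, stepCount, card_filter, smul_eq_mul,
          mul_comm i b]

variable [MeasurableSpace Ω] {μ : Measure Ω} [IsProbabilityMeasure μ] {α : ℝ}

lemma measurable_stepCount (hW : ∀ j, Measurable (W j)) (a i : ℕ) :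
    Measurable (stepCount W a i) := by
  show Measurable fun ω => #{j ∈ range i | W j ω = a}
  simp_rw [card_filter]
  exact Finset.measurable_sum _ fun j _ =>
    Measurable.ite (hW j (measurableSet_singleton a)) measurable_const measurable_const

lemma integrable_comp_stepCount {E : Type*} [NormedAddCommGroup E] (hW : ∀ j, Measurable (W j))
    (F : ℕ → E) : Integrable (fun ω => F (stepCount W a i ω)) μ :=
  Integrable.of_bound
    (StronglyMeasurable.of_discrete.comp_measurable (measurable_stepCount hW a i)).aestronglyMeasurable
    (∑ n ∈ range (i + 1), ‖F n‖) (ae_of_all _ fun ω => single_le_sum (fun n _ => norm_nonneg (F n))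
      (mem_range.mpr (Nat.lt_succ_of_le (stepCount_le W a i ω))))

lemma ae_forall_eq_or_eq (hab : a ≠ b) (hα : α ∈ Set.Icc (0 : ℝ) 1) (hW : ∀ j, Measurable (W j))
    (hWa : ∀ j, μ {ω | W j ω = a} = ENNReal.ofReal α)
    (hWb : ∀ j, μ {ω | W j ω = b} = ENNReal.ofReal (1 - α)) :
    ∀ᵐ ω ∂μ, ∀ j, W j ω = a ∨ W j ω = b := by
  refine ae_all_iff.mpr fun j => ?_
  have hmeas : ∀ c, MeasurableSet {ω | W j ω = c} := fun c => hW j (measurableSet_singleton c)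
  have hdisj : Disjoint {ω | W j ω = a} {ω | W j ω = b} :=
    Set.disjoint_left.mpr fun ω ha hb => hab (ha.symm.trans hb)
  have hunion : μ ({ω | W j ω = a} ∪ {ω | W j ω = b}) = 1 := by
    rw [measure_union hdisj (hmeas b), hWa, hWb, ← ENNReal.ofReal_add hα.1 (by linarith [hα.2]),
      add_sub_cancel, ENNReal.ofReal_one]
  rw [← Set.ofPred_or] at hunion
  exact (ae_iff_measure_eq (Set.ofPred_or ▸ ((hmeas a).union (hmeas b)).nullMeasurableSet)).mpr
    (hunion.trans measure_univ.symm)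

lemma integral_pow_stepCount (hα : 0 ≤ α) (hW : ∀ j, Measurable (W j)) (hind : iIndepFun W μ)
    (hWa : ∀ j, μ {ω | W j ω = a} = ENNReal.ofReal α) (z : ℂ) :
    ∫ ω, z ^ stepCount W a i ω ∂μ = bernoulliPGF α z ^ i := by
  have hprod : ∀ ω, z ^ stepCount W a i ω = ∏ j ∈ range i, if W j ω = a then z else 1 := by
    intro ω
    rw [prod_ite, prod_const, prod_const_one, mul_one, stepCount]
  have hstep : ∀ j, ∫ ω, (if W j ω = a then z else 1) ∂μ = bernoulliPGF α z := by
    intro j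
    have hS : MeasurableSet {ω | W j ω = a} := hW j (measurableSet_singleton a)
    have hind : (fun ω => if W j ω = a then z else 1) =
        fun ω => {ω | W j ω = a}.indicator (fun _ => z - 1) ω + 1 := by
      ext ω
      by_cases h : W j ω = a <;> simp [Set.indicator, h]
    rw [hind, integral_add ((integrable_const _).indicator hS) (integrable_const _),
      integral_indicator_const _ hS, integral_const, measureReal_def, hWa,
      ENNReal.toReal_ofReal hα, probReal_univ, bernoulliPGF]
    simp only [Complex.real_smul, one_smul]
    ring
  simp_rw [hprod]
  rw [hind.integral_finsetProd_comp hW (f := fun n => if n = a then z else 1) (.of_discrete),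
    prod_congr rfl fun j _ => hstep j, prod_const, card_range]

open Complex in
lemma integral_boole_dvd_eq_sum (hα : 0 ≤ α) (hW : ∀ j, Measurable (W j)) (hind : iIndepFun W μ)
    (hWa : ∀ j, μ {ω | W j ω = a} = ENNReal.ofReal α) {m : ℕ} (hm : m ≠ 0) (u c : ℕ) :
    ((∫ ω, (if m ∣ u * stepCount W a i ω + c then 1 else 0 : ℝ) ∂μ : ℝ) : ℂ) =
      1 / m * ∑ j ∈ range m, exp (2 * Real.pi * I / m) ^ (j * c) *
        bernoulliPGF α (exp (2 * Real.pi * I / m) ^ (j * u)) ^ i := by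
  set ζ := exp (2 * Real.pi * I / m)
  have hζ : IsPrimitiveRoot ζ m := Complex.isPrimitiveRoot_exp m hm
  have hfilter : ∀ n, ((if m ∣ n then 1 else 0 : ℝ) : ℂ) = 1 / m * ∑ j ∈ range m, ζ ^ (j * n) := by
    intro n
    rw [hζ.sum_range_pow_mul_eq_ite]
    split_ifs <;> simp [hm]
  rw [← integral_complex_ofReal]
  simp_rw [hfilter]
  rw [integral_const_mul, integral_finsetSum _ fun j _ =>
    integrable_comp_stepCount hW fun n => ζ ^ (j * (u * n + c))]
  congr 1
  refine sum_congr rfl fun j _ => ?_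
  simp_rw [mul_add, pow_add, mul_left_comm j u, pow_mul]
  rw [integral_mul_const, integral_pow_stepCount hα hW hind hWa, mul_comm, pow_right_comm ζ u j]

open Complex in
lemma abs_integral_boole_dvd_sub_inv_le (hα : α ∈ Set.Ioo (0 : ℝ) 1) (hW : ∀ j, Measurable (W j))
    (hind : iIndepFun W μ) (hWa : ∀ j, μ {ω | W j ω = a} = ENNReal.ofReal α) {m u : ℕ}
    (hm : 0 < m) (hu : u.Coprime m) (c : ℕ) (hi : 0 < i) :
    |∫ ω, (if m ∣ u * stepCount W a i ω + c then 1 else 0 : ℝ) ∂μ - 1 / m| ≤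
      3 / √(α * (1 - α) * i) := by
  set ζ := exp (2 * Real.pi * I / m)
  have hsplit : ((∫ ω, (if m ∣ u * stepCount W a i ω + c then 1 else 0 : ℝ) ∂μ - 1 / m : ℝ) : ℂ) =
      1 / m * ∑ j ∈ Ico 1 m, ζ ^ (j * c) * bernoulliPGF α (ζ ^ (j * u)) ^ i := by
    rw [ofReal_sub, integral_boole_dvd_eq_sum hα.1.le hW hind hWa hm.ne', range_eq_Ico,
      sum_eq_sum_Ico_succ_bot hm]
    simp only [one_div, zero_mul, pow_zero, bernoulliPGF, mul_one, add_sub_cancel, one_pow,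
      zero_add, ofReal_inv, ofReal_natCast]
    ring
  rw [← Real.norm_eq_abs, ← Complex.norm_real, hsplit, norm_mul]
  calc ‖(1 / m : ℂ)‖ * ‖∑ j ∈ Ico 1 m, ζ ^ (j * c) * bernoulliPGF α (ζ ^ (j * u)) ^ i‖
      ≤ 1 / m * ∑ j ∈ Ico 1 m, ‖bernoulliPGF α (ζ ^ (j * u))‖ ^ i := by
        rw [norm_div, norm_one, Complex.norm_natCast]
        gcongr
        refine (norm_sum_le _ _).trans_eq (sum_congr rfl fun j _ => ?_)
        rw [norm_mul, norm_pow, norm_pow, (Complex.isPrimitiveRoot_exp m hm.ne').norm'_eq_one hm.ne',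
          one_pow, one_mul]
    _ ≤ 1 / m * (3 * m / √(α * (1 - α) * i)) := by
        gcongr
        exact sum_Ico_norm_bernoulliPGF_pow_le hα hu hi
    _ = 3 / √(α * (1 - α) * i) := by
        field_simp

lemma abs_integral_boole_dvd_add_mul_sub_le (hα : α ∈ Set.Ioo (0 : ℝ) 1)
    (hW : ∀ j, Measurable (W j)) (hind : iIndepFun W μ)
    (hWa : ∀ j, μ {ω | W j ω = a} = ENNReal.ofReal α) {M : ℕ} (hM : 0 < M) (c v : ℕ)
    (hi : 0 < i) :
    |∫ ω, (if M ∣ c + v * stepCount W a i ω then 1 else 0 : ℝ) ∂μ -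
        if v.gcd M ∣ c then (v.gcd M : ℝ) / M else 0| ≤ 3 / √(α * (1 - α) * i) := by
  set g := v.gcd M
  have hg : 0 < g := Nat.gcd_pos_of_pos_right v hM
  have hgv : g ∣ v := Nat.gcd_dvd_left v M
  have hgM : g ∣ M := Nat.gcd_dvd_right v M
  by_cases hc : g ∣ c
  · have hiff : ∀ n, M ∣ c + v * n ↔ M / g ∣ v / g * n + c / g := fun n => by
      conv_rhs => rw [← Nat.mul_dvd_mul_iff_left hg, mul_add, ← mul_assoc,
        Nat.mul_div_cancel' hgv, Nat.mul_div_cancel' hc, Nat.mul_div_cancel' hgM, add_comm]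
    have hgM' : (g : ℝ) / M = 1 / (M / g : ℕ) := by
      rw [Nat.cast_div hgM (by positivity)]
      field_simp
    simp_rw [hiff, if_pos hc, hgM']
    exact abs_integral_boole_dvd_sub_inv_le hα hW hind hWa
      (Nat.div_pos (Nat.gcd_le_right _ hM) hg) (Nat.coprime_div_gcd_div_gcd hg) (c / g) hi
  · have hndvd : ∀ n, ¬ M ∣ c + v * n := fun n h =>
      hc ((Nat.dvd_add_left (hgv.mul_right n)).mp (hgM.trans h))
    simp only [hndvd, if_false, hc, integral_zero, sub_zero, abs_zero]
    positivity

open scoped Classical in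
lemma integral_boole_isKFree_eq_sum_moebius {k r : ℕ} (hk : k ≠ 0) (hb : 1 ≤ b) (hab : b < a)
    (hα : α ∈ Set.Icc (0 : ℝ) 1) (hW : ∀ j, Measurable (W j))
    (hWa : ∀ j, μ {ω | W j ω = a} = ENNReal.ofReal α)
    (hWb : ∀ j, μ {ω | W j ω = b} = ENNReal.ofReal (1 - α)) (hi : 1 ≤ i) :
    ∫ ω, (if IsKFree k (r + ∑ j ∈ range i, W j ω) then 1 else 0 : ℝ) ∂μ =
      ∑ d ∈ Icc 1 ⌊((a * i + r : ℕ) : ℝ) ^ ((1 : ℝ) / k)⌋₊, (ArithmeticFunction.moebius d : ℝ) *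
        ∫ ω, (if d ^ k ∣ b * i + r + (a - b) * stepCount W a i ω then 1 else 0 : ℝ) ∂μ := by
  set D := ⌊((a * i + r : ℕ) : ℝ) ^ ((1 : ℝ) / k)⌋₊
  have hae : ∀ᵐ ω ∂μ, (if IsKFree k (r + ∑ j ∈ range i, W j ω) then 1 else 0 : ℝ) =
      ∑ d ∈ Icc 1 D, (ArithmeticFunction.moebius d : ℝ) *
        (if d ^ k ∣ b * i + r + (a - b) * stepCount W a i ω then 1 else 0) := by
    filter_upwards [ae_forall_eq_or_eq hab.ne' hα hW hWa hWb] with ω hω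
    have hsum : r + ∑ j ∈ range i, W j ω = b * i + r + (a - b) * stepCount W a i ω := by
      rw [sum_range_eq_add_stepCount hab.le fun j _ => hω j]
      ring
    have hn : b * i + r + (a - b) * stepCount W a i ω ≠ 0 := by
      have := Nat.mul_pos hb hi
      omega
    have hnD : b * i + r + (a - b) * stepCount W a i ω < (D + 1) ^ k := by
      refine lt_of_le_of_lt ?_ (lt_natFloor_rpow_one_div_add_one_pow hk _)
      have := Nat.mul_le_mul_left (a - b) (stepCount_le W a i ω)
      have : b * i + (a - b) * i = a * i := by rw [← add_mul, Nat.add_sub_cancel' hab.le]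
      omega
    rw [hsum, ← sum_moebius_pow_dvd_eq_ite_isKFree hk hn hnD, sum_filter]
    simp_rw [mul_boole]
  rw [integral_congr_ae hae, integral_finsetSum]
  · simp_rw [integral_const_mul]
  · exact fun d _ => integrable_comp_stepCount hW fun n =>
      (ArithmeticFunction.moebius d : ℝ) * if d ^ k ∣ b * i + r + (a - b) * n then 1 else 0

end StepCount

open scoped Classical in
/-- For `k ≥ 2`, integers `a > b ≥ 1`, `r ≥ 0`, `α ∈ (0,1)`, and the `α`-random walk
`P_0 = r`, `P_i = P_{i-1} + W_i` with i.i.d. jumps `a` (prob. `α`) and `b` (prob. `1-α`),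
letting `X_i` be the indicator that `P_i` is `k`-free, there is `C = C(k,a,b,r) > 0`
such that `|E(X_i) - f(i)| ≤ C i^(1/k-1/2)/√(α(1-α))` for all `i ≥ 1`, where
`f(i) = ∑_{1 ≤ d ≤ (ai+r)^(1/k), gcd(a-b,d^k) ∣ bi+r} μ(d) gcd(a-b,d^k)/d^k`. -/
theorem stmt_12 {Ω : Type*} [MeasurableSpace Ω] (μ' : Measure Ω) [IsProbabilityMeasure μ']
    (k a b r : ℕ) (hk : 2 ≤ k) (hb : 1 ≤ b) (hab : b < a)
    (α : ℝ) (hα : α ∈ Set.Ioo (0:ℝ) 1)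
    (W : ℕ → Ω → ℕ) (hWmeas : ∀ i, Measurable (W i))
    (hindep : iIndepFun W μ')
    (hWa : ∀ i, μ' {ω | W i ω = a} = ENNReal.ofReal α)
    (hWb : ∀ i, μ' {ω | W i ω = b} = ENNReal.ofReal (1 - α))
    (P : ℕ → Ω → ℕ) (hP : ∀ i ω, P i ω = r + ∑ j ∈ Finset.range i, W j ω)
    (X : ℕ → Ω → ℝ) (hX : ∀ i ω, X i ω = if IsKFree k (P i ω) then 1 else 0)
    (f : ℕ → ℝ)
    (hf : ∀ i : ℕ, f i =
      ∑ d ∈ (Finset.Icc 1 ⌊((a * i + r : ℕ) : ℝ) ^ ((1 : ℝ) / k)⌋₊).filter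
          (fun d => Nat.gcd (a - b) (d ^ k) ∣ b * i + r),
        (ArithmeticFunction.moebius d : ℝ) * Nat.gcd (a - b) (d ^ k) / (d : ℝ) ^ k) :
    ∃ C : ℝ, 0 < C ∧ ∀ i : ℕ, 1 ≤ i →
      |(∫ ω, X i ω ∂μ') - f i| ≤
        C * (i : ℝ) ^ ((1 : ℝ) / k - 1 / 2) / Real.sqrt (α * (1 - α)) := by
  have hk0 : k ≠ 0 := by omega
  have ha : 0 < a := by omega
  refine ⟨3 * (a + r), by positivity, fun i hi => ?_⟩
  have hfi : f i = ∑ d ∈ Icc 1 ⌊((a * i + r : ℕ) : ℝ) ^ ((1 : ℝ) / k)⌋₊,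
      (ArithmeticFunction.moebius d : ℝ) *
        if (a - b).gcd (d ^ k) ∣ b * i + r then ((a - b).gcd (d ^ k) : ℝ) / (d ^ k : ℕ) else 0 := by
    rw [hf, sum_filter]
    refine sum_congr rfl fun d _ => ?_
    split_ifs <;> push_cast <;> ring
  simp_rw [hX, hP]
  rw [integral_boole_isKFree_eq_sum_moebius hk0 hb hab ⟨hα.1.le, hα.2.le⟩ hWmeas hWa hWb hi, hfi,
    ← sum_sub_distrib]
  calc _ ≤ ∑ _d ∈ Icc 1 ⌊((a * i + r : ℕ) : ℝ) ^ ((1 : ℝ) / k)⌋₊, 3 / √(α * (1 - α) * i) := by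
        refine (abs_sum_le_sum_abs _ _).trans (sum_le_sum fun d hd => ?_)
        rw [← mul_sub, abs_mul]
        refine (mul_le_of_le_one_left (abs_nonneg _) ?_).trans
          (abs_integral_boole_dvd_add_mul_sub_le hα hWmeas hindep hWa ?_ _ _ hi)
        · exact_mod_cast ArithmeticFunction.abs_moebius_le_one
        · exact pow_pos (mem_Icc.mp hd).1 k
    _ ≤ (a + r) * (i : ℝ) ^ ((1 : ℝ) / k) * (3 / √(α * (1 - α) * i)) := by
        rw [sum_const, Nat.card_Icc, nsmul_eq_mul, Nat.add_sub_cancel]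
        gcongr
        exact natFloor_rpow_one_div_le (by omega) hi hk0
    _ = 3 * (a + r) * (i : ℝ) ^ ((1 : ℝ) / k - 1 / 2) / √(α * (1 - α)) := by
        rw [Real.sqrt_mul (mul_pos hα.1 (sub_pos.mpr hα.2)).le,
          Real.rpow_sub (by exact_mod_cast hi), Real.sqrt_eq_rpow (i : ℝ)]
        field_simp
end
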